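/- arXiv:1705.01018 — 9 statements merged into one kernel-verified Lean document; each statement's English description precedes it below -/
import Mathlib

section
/- Let Λ ∈ (0, ∞), N ∈ ℕ, φ : (0, Λ] → ℂ absolutely integrable, and a_0, …, a_N ∈ ℂ with φ(x) − Σ_{k=0}^{N} a_k x^k = O(x^{N+1}) as x → 0⁺. Define G(λ) := ∫_0^Λ x^λ (φ(x) − Σ_{k=0}^{N} a_k x^k) dx + Σ_{k=0}^{N} a_k Λ^{λ+k+1}/(λ+k+1). Then G is analytic on the set {λ ∈ ℂ : Re λ > −2−N} \ {−1, −2, …, −(N+1)}, and G(λ) = I_λ := ∫_0^Λ x^λ φ(x) dx whenever Re λ > −1. -/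
/-!
Write `ψ = φ - ∑ a_k x^k`. Cut off at `Λ`, the remainder `ψ` is integrable and `O(x^{N+1})` at
`0`, so `λ ↦ ∫_0^Λ x^λ ψ(x) dx` is its Mellin transform at `λ + 1` and is holomorphic for
`Re λ > -2 - N`; the correction terms `a_k Λ^{λ+k+1}/(λ+k+1)` are holomorphic away from their
poles. For `Re λ > -1` they are exactly the integrals `∫_0^Λ x^λ a_k x^k dx`, so adding them
back recovers `∫_0^Λ x^λ φ(x) dx`.
-/

open MeasureTheory Complex Filter Set Topology Asymptotics

section TruncatedMellin

variable {E : Type*} [NormedAddCommGroup E] {f : ℝ → E} {Λ b : ℝ} {s : ℂ}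

theorem indicator_Ioc_isBigO_atTop (f : ℝ → E) (Λ : ℝ) (g : ℝ → ℝ) :
    (Ioc 0 Λ).indicator f =O[atTop] g := by
  refine EventuallyEq.trans_isBigO ?_ (isBigO_zero g atTop)
  filter_upwards [eventually_gt_atTop Λ] with t ht
  exact indicator_of_notMem (fun h => ht.not_ge h.2) f

theorem Asymptotics.IsBigO.indicator_Ioc_nhdsGT {g : ℝ → ℝ} (hΛ : 0 < Λ)
    (h : f =O[𝓝[>] 0] g) :
    (Ioc 0 Λ).indicator f =O[𝓝[>] 0] g := by
  refine EventuallyEq.trans_isBigO ?_ h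
  filter_upwards [Ioc_mem_nhdsGT hΛ] with t ht
  exact indicator_of_mem ht f

variable [NormedSpace ℂ E]

theorem mellin_indicator_Ioc (f : ℝ → E) (Λ : ℝ) (s : ℂ) :
    mellin ((Ioc 0 Λ).indicator f) s = ∫ t in Ioc 0 Λ, (t : ℂ) ^ (s - 1) • f t := by
  simp_rw [mellin, ← indicator_smul, integral_indicator measurableSet_Ioc,
    Measure.restrict_restrict_of_subset Ioc_subset_Ioi_self]

theorem mellinConvergent_indicator_Ioc_iff :
    MellinConvergent ((Ioc 0 Λ).indicator f) s ↔
      IntegrableOn (fun t : ℝ => (t : ℂ) ^ (s - 1) • f t) (Ioc 0 Λ) := by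
  simp_rw [MellinConvergent, ← indicator_smul, integrableOn_indicator_iff measurableSet_Ioc,
    Set.inter_eq_self_of_subset_left Ioc_subset_Ioi_self]

theorem mellinConvergent_indicator_Ioc (hΛ : 0 < Λ) (hf : IntegrableOn f (Ioc 0 Λ))
    (hO : f =O[𝓝[>] 0] (· ^ (-b))) (hs : b < s.re) :
    MellinConvergent ((Ioc 0 Λ).indicator f) s :=
  mellinConvergent_of_isBigO_rpow
    ((hf.integrable_indicator measurableSet_Ioc).locallyIntegrable.locallyIntegrableOn _)
    (indicator_Ioc_isBigO_atTop f Λ _) (lt_add_one s.re) (hO.indicator_Ioc_nhdsGT hΛ) hs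

theorem differentiableAt_mellin_indicator_Ioc (hΛ : 0 < Λ) (hf : IntegrableOn f (Ioc 0 Λ))
    (hO : f =O[𝓝[>] 0] (· ^ (-b))) (hs : b < s.re) :
    DifferentiableAt ℂ (mellin ((Ioc 0 Λ).indicator f)) s :=
  mellin_differentiableAt_of_isBigO_rpow
    ((hf.integrable_indicator measurableSet_Ioc).locallyIntegrable.locallyIntegrableOn _)
    (indicator_Ioc_isBigO_atTop f Λ _) (lt_add_one s.re) (hO.indicator_Ioc_nhdsGT hΛ) hs

theorem integrableOn_Ioc_cpow_smul_of_isBigO (hΛ : 0 < Λ) (hf : IntegrableOn f (Ioc 0 Λ))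
    (hO : f =O[𝓝[>] 0] (· ^ b)) (hs : -1 - b < s.re) :
    IntegrableOn (fun t : ℝ => (t : ℂ) ^ s • f t) (Ioc 0 Λ) := by
  have := mellinConvergent_indicator_Ioc (s := s + 1) (b := -b) hΛ hf
    (by simpa only [neg_neg] using hO) (by rw [add_re, one_re]; linarith)
  rwa [mellinConvergent_indicator_Ioc_iff, add_sub_cancel_right] at this

theorem differentiableAt_integral_Ioc_cpow_smul (hΛ : 0 < Λ) (hf : IntegrableOn f (Ioc 0 Λ))
    (hO : f =O[𝓝[>] 0] (· ^ b)) (hs : -1 - b < s.re) :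
    DifferentiableAt ℂ (fun s : ℂ => ∫ t in Ioc 0 Λ, (t : ℂ) ^ s • f t) s := by
  have := differentiableAt_mellin_indicator_Ioc (s := s + 1) (b := -b) hΛ hf
    (by simpa only [neg_neg] using hO) (by rw [add_re, one_re]; linarith)
  simpa only [Function.comp_def, id, mellin_indicator_Ioc, add_sub_cancel_right] using
    this.comp s (differentiableAt_id.add_const 1)

end TruncatedMellin

section PowerIntegrals

variable {Λ : ℝ} {s : ℂ}

theorem integral_Ioc_cpow (hΛ : 0 ≤ Λ) (hs : -1 < s.re) :
    ∫ x in Ioc 0 Λ, (x : ℂ) ^ s = (Λ : ℂ) ^ (s + 1) / (s + 1) := by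
  have hs1 : s + 1 ≠ 0 := by
    rintro h
    simp [eq_neg_of_add_eq_zero_left h] at hs
  rw [← intervalIntegral.integral_of_le hΛ, integral_cpow (Or.inl hs), ofReal_zero,
    zero_cpow hs1, sub_zero]

theorem cpow_mul_sum_pow {x : ℂ} (hx : x ≠ 0) (t : Finset ℕ) (a : ℕ → ℂ) :
    x ^ s * ∑ k ∈ t, a k * x ^ k = ∑ k ∈ t, a k * x ^ (s + k) := by
  simp_rw [Finset.mul_sum, cpow_add _ _ hx, cpow_natCast]
  exact Finset.sum_congr rfl fun k _ => by ring

theorem neg_one_lt_re_add_natCast (hs : -1 < s.re) (k : ℕ) : -1 < (s + k).re := by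
  rw [add_re, natCast_re]
  linarith [k.cast_nonneg (α := ℝ)]

variable (t : Finset ℕ) (a : ℕ → ℂ)

theorem integrableOn_Ioc_cpow_mul_sum_pow (hs : -1 < s.re) :
    IntegrableOn (fun x : ℝ => (x : ℂ) ^ s * ∑ k ∈ t, a k * (x : ℂ) ^ k) (Ioc 0 Λ) := by
  refine IntegrableOn.congr_fun ?_
    (fun x hx => (cpow_mul_sum_pow (ofReal_ne_zero.2 hx.1.ne') t a).symm) measurableSet_Ioc
  refine integrable_finsetSum _ fun k _ => Integrable.const_mul ?_ (a k)
  exact (intervalIntegral.intervalIntegrable_cpow' (neg_one_lt_re_add_natCast hs k)).1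

theorem integral_Ioc_cpow_mul_sum_pow (hΛ : 0 ≤ Λ) (hs : -1 < s.re) :
    ∫ x in Ioc 0 Λ, (x : ℂ) ^ s * ∑ k ∈ t, a k * (x : ℂ) ^ k =
      ∑ k ∈ t, a k * (Λ : ℂ) ^ (s + k + 1) / (s + k + 1) := by
  have hsk := neg_one_lt_re_add_natCast hs
  rw [setIntegral_congr_fun measurableSet_Ioc
      fun x hx => cpow_mul_sum_pow (ofReal_ne_zero.2 hx.1.ne') t a,
    integral_finsetSum _ fun k _ =>
      ((intervalIntegral.intervalIntegrable_cpow' (hsk k)).1).const_mul (a k)]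
  simp_rw [integral_const_mul, integral_Ioc_cpow hΛ (hsk _), mul_div_assoc]

end PowerIntegrals

theorem differentiableAt_sum_cpow_div {c : ℂ} (hc : c ≠ 0) (t : Finset ℕ) (a : ℕ → ℂ)
    {s : ℂ} (hs : ∀ k ∈ t, s + k + 1 ≠ 0) :
    DifferentiableAt ℂ (fun s : ℂ => ∑ k ∈ t, a k * c ^ (s + k + 1) / (s + k + 1)) s := by
  refine DifferentiableAt.fun_sum fun k hk => ?_
  have hlin : DifferentiableAt ℂ (fun s : ℂ => s + k + 1) s := by fun_prop
  exact ((hlin.const_cpow (Or.inl hc)).const_mul (a k)).div hlin (hs k hk)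

/-- The function
`G(λ) = ∫_0^Λ x^λ (φ(x) − ∑_{k=0}^N a_k x^k) dx + ∑_{k=0}^N a_k Λ^{λ+k+1}/(λ+k+1)`
is analytic on `{Re λ > −2−N} \ {−1, …, −(N+1)}` and coincides with
`I_λ = ∫_0^Λ x^λ φ(x) dx` for `Re λ > −1`. -/
theorem stmt1 (Λ : ℝ) (hΛ : 0 < Λ) (N : ℕ) (φ : ℝ → ℂ) (a : ℕ → ℂ)
    (hφ : IntegrableOn φ (Set.Ioc 0 Λ))
    (hasymp : (fun x : ℝ => φ x - ∑ k ∈ Finset.range (N + 1), a k * (x : ℂ) ^ k)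
      =O[nhdsWithin 0 (Set.Ioi 0)] fun x : ℝ => x ^ (N + 1))
    (G : ℂ → ℂ)
    (hG : ∀ l : ℂ, G l =
      (∫ x in Set.Ioc (0 : ℝ) Λ,
          (x : ℂ) ^ l * (φ x - ∑ k ∈ Finset.range (N + 1), a k * (x : ℂ) ^ k))
        + ∑ k ∈ Finset.range (N + 1),
            a k * (Λ : ℂ) ^ (l + (k : ℂ) + 1) / (l + (k : ℂ) + 1)) :
    AnalyticOnNhd ℂ G
      ({l : ℂ | (-2 - (N : ℝ)) < l.re} \
        {l : ℂ | ∃ k ∈ Finset.range (N + 1), l = -((k : ℂ) + 1)}) ∧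
    ∀ l : ℂ, -1 < l.re →
      G l = ∫ x in Set.Ioc (0 : ℝ) Λ, (x : ℂ) ^ l * φ x := by
  set P : ℝ → ℂ := fun x => ∑ k ∈ Finset.range (N + 1), a k * (x : ℂ) ^ k
  have hψ : IntegrableOn (fun x => φ x - P x) (Ioc 0 Λ) :=
    hφ.sub (continuous_finsetSum _ fun k _ => by fun_prop).integrableOn_Ioc
  have hO : (fun x => φ x - P x) =O[𝓝[>] 0] (· ^ ((N : ℝ) + 1)) := by
    simpa only [← Nat.cast_add_one, Real.rpow_natCast] using hasymp
  refine ⟨DifferentiableOn.analyticOnNhd (fun l ⟨hl, hpole⟩ => ?_) ?_, fun l hl => ?_⟩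
  · rw [funext hG]
    refine DifferentiableAt.differentiableWithinAt (DifferentiableAt.add ?_ ?_)
    · simpa only [smul_eq_mul] using
        differentiableAt_integral_Ioc_cpow_smul hΛ hψ hO (by linarith [hl.out])
    · exact differentiableAt_sum_cpow_div (ofReal_ne_zero.2 hΛ.ne') _ a
        fun k hk h => hpole ⟨k, hk, by linear_combination h⟩
  · have hpoles : {l : ℂ | ∃ k ∈ Finset.range (N + 1), l = -((k : ℂ) + 1)} =
        (fun k : ℕ => -((k : ℂ) + 1)) '' (Finset.range (N + 1) : Set ℕ) := by
      ext; simp [eq_comm]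
    exact (isOpen_lt continuous_const continuous_re).sdiff
      (hpoles ▸ (Finset.finite_toSet _).image _).isClosed
  · have hψl : IntegrableOn (fun x : ℝ => (x : ℂ) ^ l * (φ x - P x)) (Ioc 0 Λ) := by
      simpa only [smul_eq_mul] using integrableOn_Ioc_cpow_smul_of_isBigO hΛ hψ hO
        (by linarith [N.cast_nonneg (α := ℝ)])
    rw [hG, ← integral_Ioc_cpow_mul_sum_pow _ _ hΛ.le hl,
      ← integral_add hψl (integrableOn_Ioc_cpow_mul_sum_pow _ _ hl)]
    congr 1 with x
    rw [← mul_add, sub_add_cancel]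
end

section
/- Let Λ ∈ (0, ∞), N ∈ ℕ, φ : (0, Λ] → ℂ absolutely integrable, and a_0, …, a_N ∈ ℂ with φ(x) − Σ_{k=0}^{N} a_k x^k = O(x^{N+1}) as x → 0⁺, and let G(λ) := ∫_0^Λ x^λ (φ(x) − Σ_{k=0}^{N} a_k x^k) dx + Σ_{k=0}^{N} a_k Λ^{λ+k+1}/(λ+k+1). Then for every k ∈ {1, …, N+1}, the analytic continuation G of λ ↦ ∫_0^Λ x^λ φ(x) dx has a simple pole at λ = −k with residue a_{k−1}; that is, lim_{λ → −k} (λ + k) · G(λ) = a_{k−1}. -/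
open MeasureTheory Complex Filter Set Asymptotics Topology

/-! Near `λ = -k` the integral term stays bounded: for `Re λ ∈ [σ, τ]` with
`σ + N + 1 > -1`, the integrand is dominated by `(x^σ + x^τ) ‖φ x - ∑ a_j x^j‖`, which is
integrable on `(0, Λ]` because of the `O(x^{N+1})` bound at `0`; so `(λ + k)` times it tends
to `0`. In the finite sum only the term `j = k - 1` has a pole at `-k`, and `(λ + k)` times it
is `a_{k-1} Λ^{λ+k} → a_{k-1}`; the other terms are holomorphic at `-k` and are killed by the
factor `λ + k`. -/

lemma integrableOn_rpow_mul_norm_of_isBigO {Λ σ r : ℝ} {f : ℝ → ℂ}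
    (hf : IntegrableOn f (Ioc 0 Λ)) (hO : f =O[𝓝[>] 0] fun x => x ^ r) (hσr : -1 < σ + r) :
    IntegrableOn (fun x => x ^ σ * ‖f x‖) (Ioc 0 Λ) := by
  rcases le_or_gt Λ 0 with hΛ | hΛ
  · simp [Ioc_eq_empty_of_le hΛ]
  have hO' : (fun x => x ^ σ * ‖f x‖) =O[𝓝[>] 0] fun x => x ^ (σ + r) :=
    ((isBigO_refl (fun x : ℝ => x ^ σ) _).mul hO.norm_left).trans_eventuallyEq
      (eventually_mem_nhdsWithin.mono fun x hx => (Real.rpow_add hx σ r).symm)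
  have hmeas : StronglyMeasurableAtFilter (fun x => x ^ σ * ‖f x‖) (𝓝[>] 0) :=
    ⟨Ioc 0 Λ, Ioc_mem_nhdsGT hΛ,
      (measurable_id.pow_const σ).aestronglyMeasurable.mul hf.norm.aestronglyMeasurable⟩
  obtain ⟨s, hs, hs_int⟩ := hO'.integrableAtFilter hmeas
    ⟨Ioo 0 1, Ioo_mem_nhdsGT one_pos,
      (intervalIntegral.integrableOn_Ioo_rpow_iff one_pos).2 hσr⟩
  obtain ⟨ε, hε, hεs⟩ := mem_nhdsGT_iff_exists_Ioo_subset.1 hs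
  have hε2 : (0 : ℝ) < ε / 2 := half_pos hε
  have h_far : IntegrableOn (fun x => x ^ σ * ‖f x‖) (Icc (ε / 2) Λ) :=
    IntegrableOn.continuousOn_mul
      (continuousOn_id.rpow_const fun x hx => Or.inl (hε2.trans_le hx.1).ne')
      ((hf.mono_set (Icc_subset_Ioc hε2 le_rfl)).norm) isCompact_Icc
  refine ((hs_int.mono_set hεs).union h_far).mono_set fun x hx => ?_
  rcases lt_or_ge x ε with h | h
  · exact Or.inl ⟨hx.1, h⟩
  · exact Or.inr ⟨by linarith, hx.2⟩

lemma Real.rpow_le_rpow_add_rpow {x σ s τ : ℝ} (hx : 0 < x) (hσ : σ ≤ s) (hτ : s ≤ τ) :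
    x ^ s ≤ x ^ σ + x ^ τ := by
  rcases le_total x 1 with h | h
  · linarith [Real.rpow_le_rpow_of_exponent_ge hx h hσ, Real.rpow_nonneg hx.le τ]
  · linarith [Real.rpow_le_rpow_of_exponent_le h hτ, Real.rpow_nonneg hx.le σ]

lemma isBoundedUnder_norm_integral_cpow_mul {Λ r : ℝ} {f : ℝ → ℂ}
    (hf : IntegrableOn f (Ioc 0 Λ)) (hO : f =O[𝓝[>] 0] fun x => x ^ r) {l₀ : ℂ}
    (hl₀ : -1 < l₀.re + r) :
    IsBoundedUnder (· ≤ ·) (𝓝 l₀) fun l => ‖∫ x in Ioc 0 Λ, (x : ℂ) ^ l * f x‖ := by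
  set σ := (l₀.re - r - 1) / 2 with hσ
  set τ := l₀.re + 1 with hτ
  have h_int : IntegrableOn (fun x => x ^ σ * ‖f x‖ + x ^ τ * ‖f x‖) (Ioc 0 Λ) :=
    (integrableOn_rpow_mul_norm_of_isBigO hf hO (by linarith [hσ])).add
      (integrableOn_rpow_mul_norm_of_isBigO hf hO (by linarith [hτ]))
  have h_re : ∀ᶠ l in 𝓝 l₀, l.re ∈ Ioo σ τ :=
    continuous_re.continuousAt (Ioo_mem_nhds (by linarith [hσ]) (by linarith [hτ]))
  refine isBoundedUnder_of_eventually_le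
    (a := ∫ x in Ioc 0 Λ, (x ^ σ * ‖f x‖ + x ^ τ * ‖f x‖)) ?_
  filter_upwards [h_re] with l hl
  refine norm_integral_le_of_norm_le h_int ?_
  filter_upwards [ae_restrict_mem measurableSet_Ioc] with x hx
  rw [norm_mul, norm_cpow_eq_rpow_re_of_pos hx.1, ← add_mul]
  exact mul_le_mul_of_nonneg_right (Real.rpow_le_rpow_add_rpow hx.1 hl.1.le hl.2.le)
    (norm_nonneg _)

lemma tendsto_sub_mul_integral_cpow_mul {Λ r : ℝ} {f : ℝ → ℂ}
    (hf : IntegrableOn f (Ioc 0 Λ)) (hO : f =O[𝓝[>] 0] fun x => x ^ r) {l₀ : ℂ}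
    (hl₀ : -1 < l₀.re + r) :
    Tendsto (fun l => (l - l₀) * ∫ x in Ioc 0 Λ, (x : ℂ) ^ l * f x) (𝓝 l₀) (𝓝 0) :=
  (tendsto_sub_nhds_zero_iff.2 tendsto_id).zero_mul_isBoundedUnder_le
    (isBoundedUnder_norm_integral_cpow_mul hf hO hl₀)

lemma tendsto_add_mul_cpow_div_self {b : ℂ} (hb : b ≠ 0) (c μ : ℂ) :
    Tendsto (fun l => (l + μ) * (c * b ^ (l + μ) / (l + μ))) (𝓝[≠] (-μ)) (𝓝 c) := by
  have h_cont : Tendsto (fun l => c * b ^ (l + μ)) (𝓝 (-μ)) (𝓝 c) := by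
    have := ((continuous_add_const μ).const_cpow (.inl hb)).const_mul c |>.tendsto (-μ)
    simpa using this
  refine (h_cont.mono_left nhdsWithin_le_nhds).congr' ?_
  filter_upwards [self_mem_nhdsWithin] with l hl
  have : l + μ ≠ 0 := fun h => hl (eq_neg_of_add_eq_zero_left h)
  field_simp

lemma tendsto_add_mul_cpow_div_of_ne {b : ℂ} (hb : b ≠ 0) (c : ℂ) {μ ν : ℂ} (hμν : μ ≠ ν) :
    Tendsto (fun l => (l + ν) * (c * b ^ (l + μ) / (l + μ))) (𝓝 (-ν)) (𝓝 0) := by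
  have h_den : -ν + μ ≠ 0 := fun h => hμν (by linear_combination h)
  have h_pow : Continuous fun l => b ^ (l + μ) := (continuous_add_const μ).const_cpow (.inl hb)
  have h_cont : ContinuousAt (fun l => (l + ν) * (c * b ^ (l + μ) / (l + μ))) (-ν) := by
    fun_prop (disch := assumption)
  simpa using h_cont.tendsto

lemma tendsto_mul_sum_cpow_div {b : ℂ} (hb : b ≠ 0) (a : ℕ → ℂ) {N k : ℕ} (hk₁ : 1 ≤ k)
    (hk₂ : k ≤ N + 1) :
    Tendsto (fun l : ℂ => (l + k) * ∑ j ∈ Finset.range (N + 1), a j * b ^ (l + j + 1) / (l + j + 1))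
      (𝓝[≠] (-k)) (𝓝 (a (k - 1))) := by
  have h_mem : k - 1 ∈ Finset.range (N + 1) := Finset.mem_range.2 (by omega)
  have h_cast : ((k - 1 : ℕ) : ℂ) + 1 = k := by exact_mod_cast Nat.sub_add_cancel hk₁
  set term : ℕ → ℂ → ℂ := fun j l => (l + k) * (a j * b ^ (l + (j + 1)) / (l + (j + 1)))
  have h_split : ∀ l : ℂ, (l + k) * ∑ j ∈ Finset.range (N + 1), a j * b ^ (l + j + 1) / (l + j + 1)
      = term (k - 1) l + ∑ j ∈ (Finset.range (N + 1)).erase (k - 1), term j l := by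
    intro l
    rw [Finset.add_sum_erase _ (term · l) h_mem]
    simp only [term, Finset.mul_sum, add_assoc]
  have h_pole : Tendsto (term (k - 1)) (𝓝[≠] (-k)) (𝓝 (a (k - 1))) := by
    simpa only [term, h_cast] using tendsto_add_mul_cpow_div_self hb (a (k - 1)) (k : ℂ)
  have h_rest : Tendsto (fun l => ∑ j ∈ (Finset.range (N + 1)).erase (k - 1), term j l)
      (𝓝[≠] (-k)) (𝓝 0) := by
    rw [← Finset.sum_const_zero (s := (Finset.range (N + 1)).erase (k - 1))]
    refine tendsto_finsetSum _ fun j hj => ?_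
    have hjk : (j : ℂ) + 1 ≠ k := by
      rw [← h_cast]
      exact_mod_cast fun h => Finset.ne_of_mem_erase hj (by omega)
    exact (tendsto_add_mul_cpow_div_of_ne hb (a j) hjk).mono_left nhdsWithin_le_nhds
  simpa only [h_split, add_zero] using h_pole.add h_rest

/-- The analytic continuation `G` of `λ ↦ ∫_0^Λ x^λ φ(x) dx` has, for every
`k ∈ {1, …, N+1}`, a simple pole at `λ = −k` with residue `a_{k−1}`:
`lim_{λ → −k} (λ + k) G(λ) = a_{k−1}`. -/
theorem stmt2 (Λ : ℝ) (hΛ : 0 < Λ) (N : ℕ) (φ : ℝ → ℂ) (a : ℕ → ℂ)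
    (hφ : IntegrableOn φ (Set.Ioc 0 Λ))
    (hasymp : (fun x : ℝ => φ x - ∑ k ∈ Finset.range (N + 1), a k * (x : ℂ) ^ k)
      =O[nhdsWithin 0 (Set.Ioi 0)] fun x : ℝ => x ^ (N + 1))
    (G : ℂ → ℂ)
    (hG : ∀ l : ℂ, G l =
      (∫ x in Set.Ioc (0 : ℝ) Λ,
          (x : ℂ) ^ l * (φ x - ∑ k ∈ Finset.range (N + 1), a k * (x : ℂ) ^ k))
        + ∑ k ∈ Finset.range (N + 1),
            a k * (Λ : ℂ) ^ (l + (k : ℂ) + 1) / (l + (k : ℂ) + 1)) :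
    ∀ k : ℕ, 1 ≤ k → k ≤ N + 1 →
      Filter.Tendsto (fun l : ℂ => (l + (k : ℂ)) * G l)
        (nhdsWithin (-(k : ℂ)) {(-(k : ℂ))}ᶜ) (nhds (a (k - 1))) := by
  intro k hk₁ hk₂
  have h_int : IntegrableOn (fun x : ℝ => φ x - ∑ j ∈ Finset.range (N + 1), a j * (x : ℂ) ^ j)
      (Ioc 0 Λ) :=
    hφ.sub (by fun_prop : Continuous _).integrableOn_Ioc
  have h_O : (fun x : ℝ => φ x - ∑ j ∈ Finset.range (N + 1), a j * (x : ℂ) ^ j)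
      =O[𝓝[>] 0] fun x : ℝ => x ^ ((N + 1 : ℕ) : ℝ) := by
    simpa only [Real.rpow_natCast] using hasymp
  have h_re : -1 < (-(k : ℂ)).re + ((N + 1 : ℕ) : ℝ) := by
    have : (k : ℝ) ≤ N + 1 := by exact_mod_cast hk₂
    push_cast
    simp only [neg_re, natCast_re]
    linarith
  have h_integral := (tendsto_sub_mul_integral_cpow_mul h_int h_O h_re).mono_left
    (nhdsWithin_le_nhds (s := {-(k : ℂ)}ᶜ))
  have h_sum := tendsto_mul_sum_cpow_div (ofReal_ne_zero.2 hΛ.ne') a hk₁ hk₂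
  simpa only [hG, mul_add, sub_neg_eq_add, zero_add] using h_integral.add h_sum
end

section
/- For every s ∈ ℂ with Re s > 0 and s ≠ 1, the integral ∫_0^∞ x^{s−1}/(e^x + 1) dx converges absolutely and equals Γ(s) · (1 − 2^{1−s}) · ζ(s), where Γ is the complex Gamma function and ζ is the Riemann zeta function (so that (1 − 2^{1−s})ζ(s) is the Dirichlet eta function η(s)). -/
/-!
For `Re s > 1` expand `1 / (eˣ + 1) = ∑ₙ (-1)ⁿ e^{-(n+1)x}` and integrate termwise against
`x^{s-1}`: the Mellin transform is `Γ(s) ∑ₙ (-1)ⁿ (n+1)^{-s} = Γ(s) η(s)`, and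
`η(s) = (1 - 2^{1-s}) ζ(s)` since subtracting twice the even terms `2^{-s} ζ(s)` from `ζ(s)`
alternates its signs. Both identities then extend by analytic continuation. The Dirichlet series
of `η` is the L-function of a function on `ZMod 2` with zero sum, hence entire;
this is what lets the continuation pass around the pole of `ζ` at `s = 1`.
-/

open MeasureTheory Complex Filter Set Topology

lemma LSeriesHasSum_indicator_dvd {d : ℕ} (hd : d ≠ 0) {s : ℂ} (hs : 1 < s.re) :
    LSeriesHasSum (fun n => if d ∣ n then 1 else 0) s (d ^ (-s) * riemannZeta s) := by
  have h_mul (k : ℕ) : LSeries.term (fun n => if d ∣ n then 1 else 0) s (d * k)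
      = d ^ (-s) * LSeries.term 1 s k := by
    rcases eq_or_ne k 0 with rfl | hk
    · simp
    · rw [LSeries.term_of_ne_zero hk, LSeries.term_of_ne_zero (mul_ne_zero hd hk),
        Nat.cast_mul, natCast_mul_natCast_cpow, cpow_neg]
      simp [div_eq_mul_inv, mul_comm]
  have h_off : ∀ n ∉ range (d * ·), LSeries.term (fun n => if d ∣ n then 1 else 0) s n = 0 := by
    intro n hn
    have hdn : ¬ d ∣ n := fun ⟨k, hk⟩ => hn ⟨k, hk.symm⟩
    simp [LSeries.term, hdn]
  exact ((mul_right_injective₀ hd).hasSum_iff h_off).mp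
    (((LSeriesHasSum_one hs).mul_left _).congr_fun h_mul)

def alternatingSign : ZMod 2 → ℂ := fun j => -(-1) ^ j.val

lemma alternatingSign_natCast (n : ℕ) : alternatingSign n = (-1) ^ (n + 1) := by
  rw [alternatingSign, ZMod.val_natCast, ← neg_one_pow_eq_pow_mod_two, pow_succ, mul_neg_one]

lemma sum_alternatingSign : ∑ j, alternatingSign j = 0 := by
  simp [alternatingSign, Fin.sum_univ_two, ZMod, ZMod.val]

lemma LSeriesHasSum_alternatingSign {s : ℂ} (hs : 1 < s.re) :
    LSeriesHasSum (fun n : ℕ => alternatingSign n) s ((1 - 2 ^ (1 - s)) * riemannZeta s) := by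
  have h := (LSeriesHasSum_one hs).sub ((LSeriesHasSum_indicator_dvd two_ne_zero hs).smul 2)
  convert h using 1
  · ext n
    simp only [alternatingSign_natCast, Pi.sub_apply, Pi.smul_apply, Pi.one_apply]
    split_ifs with hn
    · rw [(even_iff_two_dvd.2 hn).add_one.neg_one_pow]
      norm_num
    · rw [(Nat.not_even_iff_odd.1 (mt even_iff_two_dvd.1 hn)).add_one.neg_one_pow]
      norm_num
  · rw [sub_eq_add_neg (1 : ℂ) s, cpow_add _ _ two_ne_zero, cpow_one, Nat.cast_ofNat, cpow_neg]
    ring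

lemma hasSum_neg_one_pow_div_cpow {s : ℂ} (hs : 1 < s.re) :
    HasSum (fun n : ℕ => (-1) ^ n / ((n : ℂ) + 1) ^ s) ((1 - 2 ^ (1 - s)) * riemannZeta s) := by
  have h := (hasSum_nat_add_iff' 1).mpr (LSeriesHasSum_alternatingSign hs)
  simp only [Finset.range_one, Finset.sum_singleton, LSeries.term_zero, sub_zero] at h
  refine h.congr_fun fun n => ?_
  rw [LSeries.term_of_ne_zero n.succ_ne_zero, alternatingSign_natCast]
  push_cast [pow_succ]
  ring

noncomputable def fermiDirac (x : ℝ) : ℂ := 1 / (Real.exp x + 1)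

lemma fermiDirac_eq_ofReal (x : ℝ) : fermiDirac x = ((1 / (Real.exp x + 1) : ℝ) : ℂ) := by
  simp [fermiDirac]

lemma continuous_fermiDirac : Continuous fermiDirac := by
  simp only [funext fermiDirac_eq_ofReal]
  exact continuous_ofReal.comp (continuous_const.div (by fun_prop) fun x => by positivity)

lemma norm_fermiDirac_le_one (x : ℝ) : ‖fermiDirac x‖ ≤ 1 := by
  rw [fermiDirac_eq_ofReal, norm_real, Real.norm_of_nonneg (by positivity)]
  exact div_le_one_of_le₀ (by linarith [Real.exp_pos x]) (by positivity)

lemma norm_fermiDirac_le_exp_neg (x : ℝ) : ‖fermiDirac x‖ ≤ Real.exp (-x) := by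
  rw [fermiDirac_eq_ofReal, norm_real, Real.norm_of_nonneg (by positivity), Real.exp_neg, ← one_div]
  exact one_div_le_one_div_of_le (Real.exp_pos x) (by linarith)

lemma hasSum_fermiDirac {x : ℝ} (hx : 0 < x) :
    HasSum (fun n : ℕ => (-1 : ℂ) ^ n * Real.exp (-((n : ℝ) + 1) * x)) (fermiDirac x) := by
  have hq : ‖-(Real.exp (-x) : ℂ)‖ < 1 := by
    rw [norm_neg, norm_real, Real.norm_of_nonneg (Real.exp_pos _).le]
    exact Real.exp_lt_one_iff.mpr (by linarith)
  have h := (hasSum_geometric_of_norm_lt_one hq).mul_left (Real.exp (-x) : ℂ)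
  rw [show (Real.exp (-x) : ℂ) * (1 - -(Real.exp (-x) : ℂ))⁻¹ = fermiDirac x by
    rw [fermiDirac, Real.exp_neg]; push_cast; field_simp; ring] at h
  refine h.congr_fun fun n => ?_
  rw [neg_pow, show -((n : ℝ) + 1) * x = -x + n * -x by ring, Real.exp_add, Real.exp_nat_mul]
  push_cast
  ring

lemma fermiDirac_isBigO_atTop : fermiDirac =O[atTop] fun x => Real.exp (-1 * x) :=
  Asymptotics.IsBigO.of_bound 1 <| Eventually.of_forall fun x => by
    simpa [Real.abs_exp] using norm_fermiDirac_le_exp_neg x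

lemma fermiDirac_isBigO_nhdsGT_zero : fermiDirac =O[𝓝[>] 0] fun x => x ^ (-(0 : ℝ)) :=
  Asymptotics.IsBigO.of_bound 1 <| Eventually.of_forall fun x => by
    simpa using norm_fermiDirac_le_one x

lemma mellinConvergent_fermiDirac {s : ℂ} (hs : 0 < s.re) : MellinConvergent fermiDirac s :=
  mellinConvergent_of_isBigO_rpow_exp one_pos
    (continuous_fermiDirac.locallyIntegrable.locallyIntegrableOn _)
    fermiDirac_isBigO_atTop fermiDirac_isBigO_nhdsGT_zero hs

lemma differentiableAt_mellin_fermiDirac {s : ℂ} (hs : 0 < s.re) :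
    DifferentiableAt ℂ (mellin fermiDirac) s :=
  mellin_differentiableAt_of_isBigO_rpow_exp one_pos
    (continuous_fermiDirac.locallyIntegrable.locallyIntegrableOn _)
    fermiDirac_isBigO_atTop fermiDirac_isBigO_nhdsGT_zero hs

lemma mellin_fermiDirac_of_one_lt_re {s : ℂ} (hs : 1 < s.re) :
    mellin fermiDirac s = Gamma s * ((1 - 2 ^ (1 - s)) * riemannZeta s) := by
  have h_sum : Summable fun n : ℕ => ‖(-1 : ℂ) ^ n‖ / ((n : ℝ) + 1) ^ s.re := by
    refine ((Real.summable_one_div_nat_add_rpow 1 s.re).mpr hs).congr fun n => ?_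
    rw [abs_of_nonneg (by positivity)]
    simp
  have h := hasSum_mellin (fun n => Or.inr (by positivity)) (by linarith)
    (fun x hx => hasSum_fermiDirac hx) h_sum
  refine h.unique (((hasSum_neg_one_pow_div_cpow hs).mul_left (Gamma s)).congr_fun fun n => ?_)
  push_cast
  ring

lemma eqOn_of_eq_of_one_lt_re {f g : ℂ → ℂ} {U : Set ℂ} (hU : IsOpen U) (hUc : IsPreconnected U)
    (h2 : (2 : ℂ) ∈ U) (hf : DifferentiableOn ℂ f U) (hg : DifferentiableOn ℂ g U)
    (hfg : ∀ s : ℂ, 1 < s.re → f s = g s) : EqOn f g U := by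
  have h_nhds : {s : ℂ | 1 < s.re} ∈ 𝓝 (2 : ℂ) :=
    (continuous_re.isOpen_preimage _ isOpen_Ioi).mem_nhds (by norm_num)
  exact (hf.analyticOnNhd hU).eqOn_of_preconnected_of_eventuallyEq (hg.analyticOnNhd hU) hUc h2
    (Filter.mem_of_superset h_nhds fun s hs => hfg s hs)

lemma LFunction_alternatingSign {s : ℂ} (hs : s ≠ 1) :
    ZMod.LFunction alternatingSign s = (1 - 2 ^ (1 - s)) * riemannZeta s := by
  refine eqOn_of_eq_of_one_lt_re (g := fun z => (1 - 2 ^ (1 - z)) * riemannZeta z)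
    isOpen_compl_singleton
    (isConnected_compl_singleton_of_one_lt_rank (by simp) _).isPreconnected (by norm_num)
    (ZMod.differentiable_LFunction_of_sum_zero sum_alternatingSign).differentiableOn
    (fun z hz => ?_) (fun z hz => ?_) hs
  · exact ((differentiableAt_const _).sub ((differentiableAt_const _).sub
      differentiableAt_id |>.const_cpow (Or.inl two_ne_zero))).mul
      (differentiableAt_riemannZeta hz) |>.differentiableWithinAt
  · rw [ZMod.LFunction_eq_LSeries _ hz, (LSeriesHasSum_alternatingSign hz).LSeries_eq]

lemma mellin_fermiDirac {s : ℂ} (hs : 0 < s.re) :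
    mellin fermiDirac s = Gamma s * ZMod.LFunction alternatingSign s := by
  refine eqOn_of_eq_of_one_lt_re (g := fun z => Gamma z * ZMod.LFunction alternatingSign z)
    (continuous_re.isOpen_preimage _ isOpen_Ioi)
    (convex_halfSpace_re_gt 0).isPreconnected (by norm_num)
    (fun z hz => (differentiableAt_mellin_fermiDirac hz).differentiableWithinAt)
    (fun z hz => ?_) (fun z hz => ?_) hs
  · refine ((differentiableAt_Gamma _ fun m hm => ?_).mul
      (ZMod.differentiable_LFunction_of_sum_zero sum_alternatingSign z)).differentiableWithinAt
    simp only [mem_preimage, mem_Ioi, hm, neg_re, natCast_re, neg_pos] at hz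
    exact (Nat.cast_nonneg m).not_gt hz
  · rw [mellin_fermiDirac_of_one_lt_re hz, LFunction_alternatingSign (by rintro rfl; simp at hz)]

/-- For `Re s > 0`, `s ≠ 1`, `∫_0^∞ x^{s−1}/(e^x + 1) dx` converges absolutely
and equals `Γ(s) (1 − 2^{1−s}) ζ(s)`, i.e. `Γ(s) η(s)` with `η` the Dirichlet eta function. -/
theorem stmt5 (s : ℂ) (hs : 0 < s.re) (hs1 : s ≠ 1) :
    IntegrableOn (fun x : ℝ => (x : ℂ) ^ (s - 1) / ((Real.exp x : ℂ) + 1)) (Set.Ioi 0) ∧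
    ∫ x in Set.Ioi (0 : ℝ), (x : ℂ) ^ (s - 1) / ((Real.exp x : ℂ) + 1)
      = Complex.Gamma s * (1 - (2 : ℂ) ^ (1 - s)) * riemannZeta s := by
  have h_integrand : (fun x : ℝ => (x : ℂ) ^ (s - 1) / ((Real.exp x : ℂ) + 1))
      = fun x : ℝ => (x : ℂ) ^ (s - 1) • fermiDirac x := by
    ext x
    rw [fermiDirac, smul_eq_mul, mul_one_div]
  refine ⟨h_integrand ▸ mellinConvergent_fermiDirac hs, ?_⟩
  rw [h_integrand, ← mellin, mellin_fermiDirac hs, LFunction_alternatingSign hs1, mul_assoc]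
end

section
/- For every s ∈ ℂ with Re s > 0, the integral ∫_0^∞ x^{s−1} · log(1 + e^{−x}) dx converges absolutely and equals Γ(s) · (1 − 2^{−s}) · ζ(s + 1), where Γ is the complex Gamma function and ζ is the Riemann zeta function (so the right-hand side is Γ(s)·η(s+1) with η the Dirichlet eta function). -/
/-!
Expand `log (1 + e^{-x}) = ∑_{n ≥ 1} (-1)^{n+1} e^{-n x} / n` and integrate termwise against
`x^{s-1}`: the `n`-th term contributes `Γ(s) (-1)^{n+1} / n^{s+1}`, and the interchange is
justified because, with `σ = Re s`, the integrals of the absolute values sum to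
`Γ(σ) ∑ n^{-σ-1} < ∞`. This gives `Γ(s) η(s+1)`. Finally `ζ(z) - η(z)` keeps only the even terms, doubled, which sum to `2 · 2^{-z} ζ(z)`.
-/

open MeasureTheory Complex Set

theorem hasSum_neg_one_pow_succ_div_nat_cpow {z : ℂ} (hz : 1 < z.re) :
    HasSum (fun n : ℕ => (-1) ^ (n + 1) / (n : ℂ) ^ z) ((1 - 2 ^ (1 - z)) * riemannZeta z) := by
  have hζ : HasSum (fun n : ℕ => 1 / (n : ℂ) ^ z) (riemannZeta z) := by
    rw [zeta_eq_tsum_one_div_nat_cpow hz]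
    exact (summable_one_div_nat_cpow.mpr hz).hasSum
  have hEven : HasSum (fun n : ℕ => 1 / (n : ℂ) ^ z - (-1) ^ (n + 1) / (n : ℂ) ^ z)
      (2 ^ (1 - z) * riemannZeta z) := by
    rw [← (mul_right_injective₀ (two_ne_zero' ℕ)).hasSum_iff]
    · refine (hζ.mul_left (2 ^ (1 - z))).congr_fun fun k => ?_
      simp only [Function.comp_apply]
      rw [pow_succ, Even.neg_one_pow (even_two_mul k), Nat.cast_mul, natCast_mul_natCast_cpow,
        Nat.cast_ofNat, cpow_sub _ _ two_ne_zero, cpow_one, div_mul_div_comm]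
      ring
    · rintro n hn
      obtain ⟨k, rfl⟩ : Odd n := by simpa [Nat.even_iff, Nat.odd_iff] using hn
      rw [Even.neg_one_pow (by simp [parity_simps]), sub_self]
  have := hζ.sub hEven
  simp only [sub_sub_cancel] at this
  rwa [one_sub_mul]

lemma hasSum_log_one_add_exp_neg {t : ℝ} (ht : 0 < t) :
    HasSum (fun n : ℕ => (-1) ^ (n + 1) / (n : ℂ) * Real.exp (-n * t))
      (Real.log (1 + Real.exp (-t))) := by
  have hlt : ‖(Real.exp (-t) : ℂ)‖ < 1 := by
    rw [norm_real, Real.norm_of_nonneg (Real.exp_nonneg _)]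
    exact Real.exp_lt_one_iff.mpr (neg_lt_zero.mpr ht)
  convert hasSum_taylorSeries_log hlt using 1
  · funext n
    rw [← ofReal_pow, ← Real.exp_nat_mul]
    ring_nf
  · rw [ofReal_log (by positivity), ofReal_add, ofReal_one]

lemma summable_norm_neg_one_pow_succ_div_nat_div_rpow {σ : ℝ} (hσ : 0 < σ) :
    Summable fun n : ℕ => ‖(-1) ^ (n + 1) / (n : ℂ)‖ / (n : ℝ) ^ σ := by
  refine ((Real.summable_one_div_nat_rpow (p := σ + 1)).mpr (by linarith)).congr fun n => ?_
  rw [norm_div, norm_pow, norm_neg, norm_one, one_pow, norm_natCast, div_div,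
    Real.rpow_add' n.cast_nonneg (by positivity : σ + 1 ≠ 0), Real.rpow_one, mul_comm]

lemma mellinConvergent_log_one_add_exp_neg {s : ℂ} (hs : 0 < s.re) :
    MellinConvergent (fun x : ℝ => (Real.log (1 + Real.exp (-x)) : ℂ)) s := by
  refine (Real.GammaIntegral_convergent hs).mono' ?_ ?_
  · have hcpow : ContinuousOn (fun x : ℝ => (x : ℂ) ^ (s - 1)) (Ioi 0) := fun x hx =>
      (continuousAt_ofReal_cpow_const _ _ (Or.inr (ne_of_gt hx))).continuousWithinAt
    have hlog : Measurable fun x : ℝ => (Real.log (1 + Real.exp (-x)) : ℂ) := by fun_prop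
    exact (hcpow.aestronglyMeasurable measurableSet_Ioi).smul hlog.aestronglyMeasurable
  · rw [ae_restrict_iff' measurableSet_Ioi]
    filter_upwards with x (hx : 0 < x)
    have hlog := Real.log_le_sub_one_of_pos (x := 1 + Real.exp (-x)) (by positivity)
    have hlog0 := Real.log_nonneg (x := 1 + Real.exp (-x)) (by linarith [Real.exp_pos (-x)])
    rw [smul_eq_mul, norm_mul, norm_cpow_eq_rpow_re_of_pos hx, norm_real, Real.norm_of_nonneg hlog0,
      sub_re, one_re, mul_comm]
    gcongr
    linarith

/-- For `Re s > 0`, `∫_0^∞ x^{s−1} log(1 + e^{−x}) dx` converges absolutely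
and equals `Γ(s) (1 − 2^{−s}) ζ(s+1) = Γ(s) η(s+1)`. -/
theorem stmt6 (s : ℂ) (hs : 0 < s.re) :
    IntegrableOn (fun x : ℝ => (x : ℂ) ^ (s - 1) * (Real.log (1 + Real.exp (-x)) : ℂ))
      (Set.Ioi 0) ∧
    ∫ x in Set.Ioi (0 : ℝ), (x : ℂ) ^ (s - 1) * (Real.log (1 + Real.exp (-x)) : ℂ)
      = Complex.Gamma s * (1 - (2 : ℂ) ^ (-s)) * riemannZeta (s + 1) := by
  refine ⟨mellinConvergent_log_one_add_exp_neg hs, ?_⟩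
  -- Summing from `n = 0` costs nothing: `x / 0 = 0` makes the `n = 0` terms vanish.
  have hp (n : ℕ) : (-1) ^ (n + 1) / (n : ℂ) = 0 ∨ 0 < (n : ℝ) :=
    (Nat.eq_zero_or_pos n).imp (by rintro rfl; simp) Nat.cast_pos.mpr
  have hMellin := hasSum_mellin hp hs (fun t ht => hasSum_log_one_add_exp_neg ht)
    (summable_norm_neg_one_pow_succ_div_nat_div_rpow hs)
  have hs1 : 1 < (s + 1).re := by simp [hs]
  have hEta := (hasSum_neg_one_pow_succ_div_nat_cpow hs1).mul_left (Gamma s)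
  rw [show (1 : ℂ) - (s + 1) = -s by ring, ← mul_assoc] at hEta
  refine hMellin.unique (hEta.congr_fun fun n => ?_)
  rcases n.eq_zero_or_pos with rfl | hn
  · simp [ne_zero_of_one_lt_re hs1]
  · rw [cpow_add _ _ (by exact_mod_cast hn.ne'), cpow_one]
    push_cast
    ring
end

section
/- For every real x > 0 and every real c > 1, the inverse Mellin integral (1/(2π)) ∫_{−∞}^{∞} Γ(c + it) · ζ(c + it) · x^{−(c+it)} dt converges absolutely and equals 1/(e^x − 1), where Γ is the complex Gamma function and ζ is the Riemann zeta function. -/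
/-!
Expanding `1 / (e^y - 1) = ∑_{n ≥ 1} e^{-n y}` and integrating termwise, the Mellin transform
of `y ↦ 1 / (e^y - 1)` is `Γ(s) ζ(s)` for `1 < re s`. Mellin inversion on the line `re s = c`
then recovers `1 / (e^x - 1)`; it applies because `Γ(s) ζ(s)` is integrable on that line:
`‖ζ(c + it)‖ ≤ ∑ n⁻ᶜ`, and `Γ(s) = Γ(s + 2) / (s (s + 1))` gives
`‖Γ(c + it)‖ ≤ Γ(c + 2) / (1 + t²)`.
-/

open MeasureTheory Complex Filter Set

namespace Complex

theorem norm_Gamma_le_Gamma_re {s : ℂ} (hs : 0 < s.re) : ‖Gamma s‖ ≤ Real.Gamma s.re := by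
  rw [Gamma_eq_integral hs, Real.Gamma_eq_integral hs, GammaIntegral]
  refine (norm_integral_le_integral_norm _).trans_eq <|
    setIntegral_congr_fun measurableSet_Ioi fun t ht => ?_
  rw [norm_mul, norm_real, Real.norm_eq_abs, Real.abs_exp, norm_cpow_eq_rpow_re_of_pos ht,
    sub_re, one_re]

theorem norm_Gamma_le_div_one_add_sq {s : ℂ} (hs : 1 ≤ s.re) :
    ‖Gamma s‖ ≤ Real.Gamma (s.re + 2) / (1 + s.im ^ 2) := by
  have hs0 : s ≠ 0 := fun h => by simp [h] at hs; linarith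
  have hs1 : s + 1 ≠ 0 := fun h => by
    have := congrArg re h; simp at this; linarith
  have hGamma : Gamma (s + 2) = (s + 1) * (s * Gamma s) := by
    rw [show s + 2 = s + 1 + 1 by ring, Gamma_add_one _ hs1, Gamma_add_one _ hs0]
  have hsq : 1 + s.im ^ 2 ≤ ‖s‖ ^ 2 := by
    rw [Complex.sq_norm, normSq_apply]; nlinarith
  have hle : ‖s‖ ≤ ‖s + 1‖ := by
    rw [← sq_le_sq₀ (norm_nonneg _) (norm_nonneg _), Complex.sq_norm, Complex.sq_norm,
      normSq_apply, normSq_apply, add_re, add_im, one_re, one_im]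
    nlinarith
  rw [le_div_iff₀ (by positivity)]
  calc ‖Gamma s‖ * (1 + s.im ^ 2) ≤ ‖Gamma s‖ * (‖s + 1‖ * ‖s‖) := by
        gcongr
        nlinarith [norm_nonneg s]
    _ = ‖Gamma (s + 2)‖ := by rw [hGamma, norm_mul, norm_mul]; ring
    _ ≤ Real.Gamma (s.re + 2) :=
        (norm_Gamma_le_Gamma_re (by simp; linarith)).trans_eq (by simp)

end Complex

theorem norm_riemannZeta_le_tsum {s : ℂ} (hs : 1 < s.re) :
    ‖riemannZeta s‖ ≤ ∑' n : ℕ, 1 / ((n : ℝ) + 1) ^ s.re := by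
  have hnorm (n : ℕ) : ‖1 / ((n : ℂ) + 1) ^ s‖ = 1 / ((n : ℝ) + 1) ^ s.re := by
    rw [norm_div, norm_one, ← norm_cpow_eq_rpow_re_of_pos (by positivity)]
    push_cast
    rfl
  have hsum : Summable fun n : ℕ => 1 / ((n : ℝ) + 1) ^ s.re := by
    simpa using (summable_nat_add_iff 1).mpr (Real.summable_one_div_nat_rpow.mpr hs)
  rw [zeta_eq_tsum_one_div_nat_add_one_cpow hs]
  exact (norm_tsum_le_tsum_norm (hsum.congr fun n => (hnorm n).symm)).trans_eq
    (tsum_congr hnorm)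

theorem continuous_Gamma_mul_riemannZeta_vertical {c : ℝ} (hc : 1 < c) :
    Continuous fun t : ℝ => Gamma (c + t * I) * riemannZeta (c + t * I) := by
  have hline : Continuous fun t : ℝ => (c : ℂ) + t * I := by fun_prop
  refine continuous_iff_continuousAt.mpr fun t => ContinuousAt.mul ?_ ?_
  · refine (differentiableAt_Gamma _ fun m h => ?_).continuousAt.comp hline.continuousAt
    have := congrArg re h
    simp at this
    linarith [m.cast_nonneg (α := ℝ)]
  · refine (differentiableAt_riemannZeta fun h => ?_).continuousAt.comp hline.continuousAt
    have := congrArg re h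
    simp at this
    linarith

theorem integrable_Gamma_mul_riemannZeta_vertical {c : ℝ} (hc : 1 < c) :
    Integrable fun t : ℝ => Gamma (c + t * I) * riemannZeta (c + t * I) := by
  set Z := ∑' n : ℕ, 1 / ((n : ℝ) + 1) ^ c
  have hZ : 0 ≤ Z := tsum_nonneg fun n => by positivity
  refine (integrable_inv_one_add_sq.const_mul (Real.Gamma (c + 2) * Z)).mono'
    (continuous_Gamma_mul_riemannZeta_vertical hc).aestronglyMeasurable
    (Eventually.of_forall fun t => ?_)
  have hre : ((c : ℂ) + t * I).re = c := by simp
  have him : ((c : ℂ) + t * I).im = t := by simp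
  calc ‖Gamma (c + t * I) * riemannZeta (c + t * I)‖
      ≤ Real.Gamma (c + 2) / (1 + t ^ 2) * Z := by
        rw [norm_mul]
        gcongr
        · simpa [hre, him] using norm_Gamma_le_div_one_add_sq (s := c + t * I) (by simp; linarith)
        · exact (norm_riemannZeta_le_tsum (by rw [hre]; exact hc)).trans_eq (by rw [hre])
    _ = Real.Gamma (c + 2) * Z * (1 + t ^ 2)⁻¹ := by ring

theorem hasSum_exp_neg_nat_add_one_mul {y : ℝ} (hy : 0 < y) :
    HasSum (fun n : ℕ => Real.exp (-((n : ℝ) + 1) * y)) (1 / (Real.exp y - 1)) := by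
  have hr : Real.exp (-y) < 1 := Real.exp_lt_one_iff.mpr (by linarith)
  have hsum := (hasSum_geometric_of_lt_one (Real.exp_pos _).le hr).mul_right (Real.exp (-y))
  have hval : (1 - Real.exp (-y))⁻¹ * Real.exp (-y) = 1 / (Real.exp y - 1) := by
    have : 1 < Real.exp y := Real.one_lt_exp_iff.mpr hy
    rw [Real.exp_neg]
    field_simp
  rw [hval] at hsum
  refine hsum.congr_fun fun n => ?_
  rw [← pow_succ, ← Real.exp_nat_mul]
  push_cast
  ring_nf

theorem mellin_one_div_exp_sub_one {s : ℂ} (hs : 1 < s.re) :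
    mellin (fun y : ℝ => 1 / ((Real.exp y : ℂ) - 1)) s = Gamma s * riemannZeta s := by
  have hsum := hasSum_mellin (a := fun _ : ℕ => 1) (p := fun n => (n : ℝ) + 1)
    (F := fun y : ℝ => 1 / ((Real.exp y : ℂ) - 1)) (s := s)
    (fun _ => Or.inr (by positivity)) (by linarith)
    (fun y hy => by simpa using Complex.hasSum_ofReal.mpr (hasSum_exp_neg_nat_add_one_mul hy))
    (by simpa using (summable_nat_add_iff 1).mpr (Real.summable_one_div_nat_rpow.mpr hs))
  rw [← hsum.tsum_eq, zeta_eq_tsum_one_div_nat_add_one_cpow hs, ← tsum_mul_left]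
  simp [div_eq_mul_inv]

theorem continuousOn_one_div_exp_sub_one :
    ContinuousOn (fun y : ℝ => 1 / ((Real.exp y : ℂ) - 1)) (Ioi 0) :=
  continuousOn_const.div (by fun_prop) fun y hy => by
    exact_mod_cast sub_ne_zero.mpr (Real.one_lt_exp_iff.mpr hy).ne'

theorem mellinConvergent_one_div_exp_sub_one {s : ℂ} (hs : 1 < s.re) :
    MellinConvergent (fun y : ℝ => 1 / ((Real.exp y : ℂ) - 1)) s := by
  have hnorm {y : ℝ} (hy : 0 < y) :
      ‖1 / ((Real.exp y : ℂ) - 1)‖ = (Real.exp y - 1)⁻¹ := by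
    rw [← ofReal_one, ← ofReal_sub, ← ofReal_div, norm_real, one_div,
      Real.norm_of_nonneg (inv_nonneg.mpr (by linarith [Real.add_one_le_exp y]))]
  refine mellinConvergent_of_isBigO_rpow_exp one_pos
    (continuousOn_one_div_exp_sub_one.locallyIntegrableOn measurableSet_Ioi) ?_ (b := 1) ?_ hs
  · refine Asymptotics.IsBigO.of_bound 2 ?_
    filter_upwards [eventually_ge_atTop 1] with t ht
    have : 2 ≤ Real.exp t := by linarith [Real.add_one_le_exp t]
    rw [hnorm (by linarith), Real.norm_of_nonneg (Real.exp_pos _).le, neg_one_mul, Real.exp_neg]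
    calc (Real.exp t - 1)⁻¹ ≤ (Real.exp t / 2)⁻¹ := by gcongr; linarith
      _ = 2 * (Real.exp t)⁻¹ := by ring
  · refine Asymptotics.IsBigO.of_bound 1 ?_
    filter_upwards [self_mem_nhdsWithin] with t (ht : 0 < t)
    rw [hnorm ht, Real.rpow_neg_one, Real.norm_of_nonneg (by positivity), one_mul]
    gcongr
    linarith [Real.add_one_le_exp t]

/-- For `x > 0` and `c > 1`, the inverse Mellin integral
`(1/2π) ∫_ℝ Γ(c+it) ζ(c+it) x^{−(c+it)} dt` converges absolutely and equals `1/(e^x − 1)`. -/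
theorem stmt7 (x c : ℝ) (hx : 0 < x) (hc : 1 < c) :
    Integrable (fun t : ℝ =>
      Complex.Gamma ((c : ℂ) + (t : ℂ) * Complex.I) *
        riemannZeta ((c : ℂ) + (t : ℂ) * Complex.I) *
        (x : ℂ) ^ (-((c : ℂ) + (t : ℂ) * Complex.I))) ∧
    (1 / (2 * (Real.pi : ℂ))) *
        ∫ t : ℝ, Complex.Gamma ((c : ℂ) + (t : ℂ) * Complex.I) *
          riemannZeta ((c : ℂ) + (t : ℂ) * Complex.I) *
          (x : ℂ) ^ (-((c : ℂ) + (t : ℂ) * Complex.I))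
      = 1 / ((Real.exp x : ℂ) - 1) := by
  have hmellin (t : ℝ) : Gamma (c + t * I) * riemannZeta (c + t * I) =
      mellin (fun y : ℝ => 1 / ((Real.exp y : ℂ) - 1)) (c + t * I) :=
    (mellin_one_div_exp_sub_one (by simpa using hc)).symm
  have hΓζ := integrable_Gamma_mul_riemannZeta_vertical hc
  have hcpow : Continuous fun t : ℝ => (x : ℂ) ^ (-((c : ℂ) + t * I)) :=
    Continuous.const_cpow (by fun_prop) (.inl (ofReal_ne_zero.mpr hx.ne'))
  refine ⟨hΓζ.mul_bdd hcpow.aestronglyMeasurable (c := x ^ (-c)) <| .of_forall fun t => by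
    rw [norm_cpow_eq_rpow_re_of_pos hx]; simp, ?_⟩
  have hinv := mellinInv_mellin_eq c _ hx
    (mellinConvergent_one_div_exp_sub_one (by simpa using hc)) (hΓζ.congr (.of_forall hmellin))
    (continuousOn_one_div_exp_sub_one.continuousAt (Ioi_mem_nhds hx))
  rw [mellinInv, real_smul] at hinv
  rw [← hinv, ofReal_div, ofReal_one, ofReal_mul, ofReal_ofNat]
  congr 2 with t
  rw [hmellin, smul_eq_mul, mul_comm]
end

section
/- For all real β > 0 and τ > 0, the following Jacobi theta transformation of the fermionic Matsubara sum holds: Σ_{n ∈ ℤ} exp(−τ · π²(2n+1)²/β²) = (β/(2√(πτ))) · Σ_{n ∈ ℤ} (−1)^n · exp(−n² β²/(4τ)), both series being absolutely convergent. (The left-hand side is the Gaussian sum over the fermionic Matsubara frequencies ω_n = π(2n+1)/β, and the right-hand side is (β/(2√(πτ))) · ϑ₄(0, e^{−β²/(4τ)}) with ϑ₄ the fourth Jacobi theta function.) -/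
/-! Poisson summation for the Gaussian `exp (-π a x² - π a x)`, obtained by completing the square
in `exp (-π a (x + 1/2)²)`, turns the half-integer shift on one side into the phase
`exp (π i n) = (-1)ⁿ` on the other. With `a = 4πτ/β²` this is the Matsubara identity. -/

section

open Real Complex

lemma Real.summable_exp_neg_mul_int_add_sq {a : ℝ} (ha : 0 < a) (s : ℝ) :
    Summable fun n : ℤ => rexp (-π * a * (n + s) ^ 2) := by
  have hθ := ((summable_jacobiTheta₂_term_iff (I * (a * s : ℝ)) (I * a)).2 (by simpa using ha)).norm
  refine (hθ.mul_left (rexp (-π * a * s ^ 2))).congr fun n => ?_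
  rw [norm_jacobiTheta₂_term, ← Real.exp_add]
  simp only [mul_im, I_re, I_im, ofReal_re, ofReal_im]
  ring_nf

lemma Real.summable_neg_one_zpow_mul_exp_neg_mul_int_sq {a : ℝ} (ha : 0 < a) :
    Summable fun n : ℤ => (-1 : ℝ) ^ n * rexp (-π * a * n ^ 2) := by
  refine .of_norm ((summable_exp_neg_mul_int_add_sq ha 0).congr fun n => ?_)
  simp

lemma Real.tsum_exp_neg_mul_int_add_half_sq {a : ℝ} (ha : 0 < a) :
    ∑' n : ℤ, rexp (-π * a * (n + 1 / 2) ^ 2) =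
      1 / a ^ (1 / 2 : ℝ) * ∑' n : ℤ, (-1 : ℝ) ^ n * rexp (-π / a * n ^ 2) := by
  have hpoisson := Complex.tsum_exp_neg_quadratic (a := a) (by simpa using ha) (-a / 2)
  have ha' : (a : ℂ) ≠ 0 := by exact_mod_cast ha.ne'
  have hlhs (n : ℤ) : cexp (-π * a * n ^ 2 + 2 * π * (-a / 2) * n) =
      cexp (π * a / 4) * (rexp (-π * a * (n + 1 / 2) ^ 2) : ℂ) := by
    rw [ofReal_exp, ← Complex.exp_add]
    push_cast
    ring_nf
  have hrhs (n : ℤ) : cexp (-π / a * (n + I * (-a / 2)) ^ 2) =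
      cexp (π * a / 4) * (((-1 : ℝ) ^ n * rexp (-π / a * n ^ 2) : ℝ) : ℂ) := by
    have hsign : (((-1 : ℝ) ^ n : ℝ) : ℂ) = cexp (n * (π * I)) := by
      rw [Complex.exp_int_mul, Complex.exp_pi_mul_I]; push_cast; rfl
    rw [ofReal_mul, hsign, ofReal_exp, ← Complex.exp_add, ← Complex.exp_add]
    congr 1
    push_cast
    field_simp
    linear_combination (-4 * (a : ℂ) ^ 2) * I_sq
  have hroot : 1 / (a : ℂ) ^ (1 / 2 : ℂ) = ((1 / a ^ (1 / 2 : ℝ) : ℝ) : ℂ) := by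
    rw [ofReal_div, ofReal_one, ofReal_cpow ha.le]; norm_num
  simp only [hlhs, hrhs, tsum_mul_left, ← ofReal_tsum] at hpoisson
  rw [hroot, mul_left_comm, ← ofReal_mul] at hpoisson
  exact_mod_cast mul_left_cancel₀ (Complex.exp_ne_zero _) hpoisson

end

/-- Jacobi theta transformation of the fermionic Matsubara sum: for `β, τ > 0`,
`∑_{n∈ℤ} exp(−τ π²(2n+1)²/β²) = (β/(2√(πτ))) ∑_{n∈ℤ} (−1)ⁿ exp(−n²β²/(4τ))`,
both series converging absolutely. -/
theorem stmt9 (β τ : ℝ) (hβ : 0 < β) (hτ : 0 < τ) :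
    Summable (fun n : ℤ =>
      Real.exp (-(τ * (Real.pi ^ 2 * (2 * (n : ℝ) + 1) ^ 2)) / β ^ 2)) ∧
    Summable (fun n : ℤ =>
      (-1 : ℝ) ^ n * Real.exp (-((n : ℝ) ^ 2 * β ^ 2) / (4 * τ))) ∧
    ∑' n : ℤ, Real.exp (-(τ * (Real.pi ^ 2 * (2 * (n : ℝ) + 1) ^ 2)) / β ^ 2)
      = β / (2 * Real.sqrt (Real.pi * τ)) *
          ∑' n : ℤ, (-1 : ℝ) ^ n * Real.exp (-((n : ℝ) ^ 2 * β ^ 2) / (4 * τ)) := by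
  set a : ℝ := 4 * Real.pi * τ / β ^ 2 with ha_def
  have ha : 0 < a := by positivity
  have hmatsubara (n : ℤ) : -(τ * (Real.pi ^ 2 * (2 * (n : ℝ) + 1) ^ 2)) / β ^ 2 =
      -Real.pi * a * (n + 1 / 2) ^ 2 := by
    rw [ha_def]; field_simp; ring
  have hdual (n : ℤ) : -((n : ℝ) ^ 2 * β ^ 2) / (4 * τ) = -Real.pi / a * n ^ 2 := by
    rw [ha_def]; field_simp
  have hroot : 1 / a ^ (1 / 2 : ℝ) = β / (2 * Real.sqrt (Real.pi * τ)) := by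
    rw [← Real.sqrt_eq_rpow, ha_def, Real.sqrt_div' _ (sq_nonneg β), Real.sqrt_sq hβ.le,
      one_div_div, show 4 * Real.pi * τ = 2 ^ 2 * (Real.pi * τ) by ring,
      Real.sqrt_mul' _ (by positivity), Real.sqrt_sq zero_le_two]
  simp only [hmatsubara, hdual, ← hroot]
  refine ⟨Real.summable_exp_neg_mul_int_add_sq ha _, ?_, Real.tsum_exp_neg_mul_int_add_half_sq ha⟩
  simpa only [div_eq_mul_inv] using
    Real.summable_neg_one_zpow_mul_exp_neg_mul_int_sq (inv_pos.2 ha)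
end

section
/- Let α ∈ ℂ with α ∉ ℤ, N ∈ ℕ, ω_c > 0, μ ∈ [0, ω_c), c_0, …, c_N ∈ ℂ, and let g : [ω_c, ∞) → ℂ be measurable, locally integrable, with g(ω) − Σ_{k=0}^{N} c_k ω^{α−k} = O(ω^{Re α − N − 1}) as ω → +∞. Define a_m(μ) := Σ_{n=0}^{m} c_{m−n} (Γ(α+1−m+n)/Γ(α+1−m)) μ^n/n! for 0 ≤ m ≤ N. Then, as x → 0⁺, g(μ + 1/x) − Σ_{m=0}^{N} a_m(μ) x^{m−α} = O(x^{N+1−Re α}). -/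
/-!
Put `ω = μ + 1/x`, so that `ω^(α-k) = x^(k-α) (1 + μx)^(α-k)` for small `x > 0`. Truncating the
binomial series of `(1 + μx)^(α-k)` after the power `N - k` leaves an error `O(x^(N+1-k))`, and
collecting the powers `x^(m-α)` of the truncated expansions gives the coefficients `a_m(μ)`, since
`Γ(α+1-m+n) / Γ(α+1-m) = n! binom(α-m+n, n)`. The remainder of the expansion of `g` is
`O(ω^(Re α-N-1)) = O(x^(N+1-Re α))` because `ωx → 1`.
-/

open MeasureTheory Complex Filter
open Finset Asymptotics Topology
open scoped Nat

theorem Complex.Gamma_add_nat_div_Gamma_eq_factorial_mul_choose {z : ℂ} (hz : ∀ k : ℕ, z ≠ -k)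
    (n : ℕ) : Gamma (z + n) / Gamma z = n ! * Ring.choose (z + n - 1) n := by
  rw [Gamma_add_nat_div_Gamma_eq z hz, ← nsmul_eq_mul,
    ← Ring.descPochhammer_eq_factorial_smul_choose,
    Polynomial.descPochhammer_smeval_eq_ascPochhammer, Polynomial.ascPochhammer_smeval_eq_eval]
  ring_nf

theorem Complex.Gamma_div_Gamma_eq_factorial_mul_choose_sub {α : ℂ} (hα : ∀ n : ℤ, α ≠ n)
    {m n : ℕ} (hnm : n ≤ m) :
    Gamma (α + 1 - m + n) / Gamma (α + 1 - m) = n ! * Ring.choose (α - (m - n : ℕ)) n := by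
  have hz : ∀ k : ℕ, α + 1 - m ≠ -k := fun k h =>
    hα ((m : ℤ) - 1 - k) (by push_cast; linear_combination h)
  rw [Gamma_add_nat_div_Gamma_eq_factorial_mul_choose hz, Nat.cast_sub hnm]
  ring_nf

theorem Finset.sum_range_sum_range_sub_eq {M : Type*} [AddCommMonoid M] (F : ℕ → ℕ → M)
    (N : ℕ) : ∑ m ∈ range (N + 1), ∑ n ∈ range (m + 1), F (m - n) n
      = ∑ k ∈ range (N + 1), ∑ n ∈ range (N + 1 - k), F k n := by
  rw [← sum_range_diag_flip]
  refine sum_congr rfl fun m _ => ?_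
  rw [← Nat.sum_antidiagonal_eq_sum_range_succ (fun i j => F j i),
    ← Nat.sum_antidiagonal_eq_sum_range_succ F, ← Nat.sum_antidiagonal_swap]
  rfl

theorem sum_mul_cpow_eq_sum_mul_sum_choose (α : ℂ) (hα : ∀ n : ℤ, α ≠ n) (N : ℕ) (μ : ℝ)
    (c a : ℕ → ℂ) (ha : ∀ m : ℕ, a m = ∑ n ∈ range (m + 1),
      c (m - n) * (Gamma (α + 1 - (m : ℂ) + (n : ℂ)) / Gamma (α + 1 - (m : ℂ)))
        * (μ : ℂ) ^ n / (n ! : ℂ)) {x : ℝ} (hx : 0 < x) :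
    ∑ m ∈ range (N + 1), a m * (x : ℂ) ^ ((m : ℂ) - α) = ∑ k ∈ range (N + 1), c k *
      ((x : ℂ) ^ (-(α - k)) * ∑ n ∈ range (N + 1 - k), Ring.choose (α - k) n * (μ * x) ^ n) := by
  have hx0 : (x : ℂ) ≠ 0 := ofReal_ne_zero.mpr hx.ne'
  -- `a m` collects the terms `F k n` with `k + n = m`
  let F : ℕ → ℕ → ℂ := fun k n =>
    c k * Ring.choose (α - k) n * μ ^ n * (x : ℂ) ^ ((k + n : ℕ) - α)
  calc ∑ m ∈ range (N + 1), a m * (x : ℂ) ^ ((m : ℂ) - α)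
      = ∑ m ∈ range (N + 1), ∑ n ∈ range (m + 1), F (m - n) n := by
        refine sum_congr rfl fun m _ => ?_
        rw [ha, sum_mul]
        refine sum_congr rfl fun n hn => ?_
        have hnm : n ≤ m := Nat.lt_succ_iff.mp (mem_range.mp hn)
        simp only [F, Gamma_div_Gamma_eq_factorial_mul_choose_sub hα hnm, Nat.sub_add_cancel hnm]
        have : (n ! : ℂ) ≠ 0 := Nat.cast_ne_zero.mpr n.factorial_ne_zero
        field_simp
    _ = ∑ k ∈ range (N + 1), ∑ n ∈ range (N + 1 - k), F k n := sum_range_sum_range_sub_eq F N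
    _ = _ := by
        refine sum_congr rfl fun k _ => ?_
        rw [mul_sum, mul_sum]
        refine sum_congr rfl fun n _ => ?_
        simp only [F]
        rw [show (((k + n : ℕ) : ℂ) - α) = n + -(α - k) by push_cast; ring,
          cpow_add _ _ hx0, cpow_natCast]
        ring

theorem FormalMultilinearSeries.partialSum_binomialSeries (β t : ℂ) (M : ℕ) :
    (binomialSeries ℂ β).partialSum M t = ∑ n ∈ range M, Ring.choose β n * t ^ n := by
  simp [FormalMultilinearSeries.partialSum, binomialSeries, mul_comm]

theorem Complex.isBigO_one_add_cpow_sub_sum_choose (β : ℂ) (M : ℕ) :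
    (fun t : ℂ => (1 + t) ^ β - ∑ n ∈ range M, Ring.choose β n * t ^ n) =O[𝓝 0]
      fun t => ‖t‖ ^ M := by
  simpa [FormalMultilinearSeries.partialSum_binomialSeries] using
    (one_add_cpow_hasFPowerSeriesAt_zero (a := β)).isBigO_sub_partialSum_pow M

lemma eventually_pos_and_one_add_mul_pos (μ : ℝ) :
    ∀ᶠ x in 𝓝[>] (0 : ℝ), 0 < x ∧ 0 < 1 + μ * x := by
  refine eventually_mem_nhdsWithin.and (nhdsWithin_le_nhds ?_)
  have : Tendsto (fun x : ℝ => 1 + μ * x) (𝓝 0) (𝓝 1) :=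
    (by fun_prop : Continuous fun x : ℝ => 1 + μ * x).tendsto' 0 1 (by simp)
  exact this.eventually (lt_mem_nhds one_pos)

lemma add_one_div_eq_inv_mul {μ x : ℝ} (hx : x ≠ 0) : μ + 1 / x = x⁻¹ * (1 + μ * x) := by
  field_simp; ring

lemma cpow_add_one_div_eq {μ x : ℝ} (hx : 0 < x) (hμx : 0 ≤ 1 + μ * x) (β : ℂ) :
    ((μ + 1 / x : ℝ) : ℂ) ^ β = (x : ℂ) ^ (-β) * (1 + μ * x) ^ β := by
  rw [add_one_div_eq_inv_mul hx.ne', ofReal_mul,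
    mul_cpow_ofReal_nonneg (inv_nonneg.mpr hx.le) hμx, ofReal_inv,
    inv_cpow _ _ (by rw [arg_ofReal_of_nonneg hx.le]; exact Real.pi_ne_zero.symm), ← cpow_neg]
  push_cast
  rfl

lemma isBigO_rpow_add_one_div (μ s : ℝ) :
    (fun x : ℝ => (μ + 1 / x) ^ s) =O[𝓝[>] 0] fun x => x ^ (-s) := by
  have hbdd : (fun x : ℝ => (1 + μ * x) ^ s) =O[𝓝[>] 0] fun _ => (1 : ℝ) := by
    have : ContinuousAt (fun x : ℝ => (1 + μ * x) ^ s) 0 :=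
      ContinuousAt.rpow_const (by fun_prop) (Or.inl (by simp))
    exact (this.mono_left nhdsWithin_le_nhds).isBigO_one ℝ
  refine (hbdd.mul (isBigO_refl (fun x : ℝ => x ^ (-s)) _)).congr' ?_ (by simp)
  filter_upwards [eventually_pos_and_one_add_mul_pos μ] with x ⟨hx, hμx⟩
  rw [add_one_div_eq_inv_mul hx.ne', Real.mul_rpow (inv_nonneg.mpr hx.le) hμx.le,
    Real.inv_rpow hx.le, Real.rpow_neg hx.le, mul_comm]

lemma isBigO_cpow_add_one_div_sub_sum (μ : ℝ) (β : ℂ) (M : ℕ) :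
    (fun x : ℝ => ((μ + 1 / x : ℝ) : ℂ) ^ β -
        (x : ℂ) ^ (-β) * ∑ n ∈ range M, Ring.choose β n * (μ * x) ^ n)
      =O[𝓝[>] 0] fun x => x ^ ((M : ℝ) - β.re) := by
  have hμx : Tendsto (fun x : ℝ => (μ : ℂ) * x) (𝓝[>] 0) (𝓝 0) :=
    tendsto_nhdsWithin_of_tendsto_nhds <|
      (by fun_prop : Continuous fun x : ℝ => (μ : ℂ) * x).tendsto' 0 0 (by simp)
  have hrem : (fun x : ℝ => (1 + μ * x) ^ β - ∑ n ∈ range M, Ring.choose β n * (μ * x) ^ n)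
      =O[𝓝[>] 0] fun x : ℝ => x ^ (M : ℝ) := by
    refine ((isBigO_one_add_cpow_sub_sum_choose β M).comp_tendsto hμx).trans
      (IsBigO.of_bound (‖μ‖ ^ M) ?_)
    filter_upwards [eventually_mem_nhdsWithin] with x (hx : 0 < x)
    simp [Real.rpow_natCast, mul_pow, abs_of_pos hx]
  have hpow : (fun x : ℝ => (x : ℂ) ^ (-β)) =O[𝓝[>] 0] fun x => x ^ (-β.re) := by
    refine IsBigO.of_bound 1 ?_
    filter_upwards [eventually_mem_nhdsWithin] with x (hx : 0 < x)
    rw [norm_cpow_eq_rpow_re_of_pos hx, Real.norm_of_nonneg (Real.rpow_nonneg hx.le _)]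
    simp
  refine (hpow.mul hrem).congr' ?_ ?_
  · filter_upwards [eventually_pos_and_one_add_mul_pos μ] with x ⟨hx, hμx⟩
    rw [cpow_add_one_div_eq hx (by exact_mod_cast hμx.le)]
    ring
  · filter_upwards [eventually_mem_nhdsWithin] with x (hx : 0 < x)
    rw [← Real.rpow_add hx]
    ring_nf

theorem stmt11_general (α : ℂ) (hα : ∀ n : ℤ, α ≠ (n : ℂ)) (N : ℕ) (μ : ℝ)
    (c : ℕ → ℂ) (g : ℝ → ℂ)
    (hasymp : (fun ω : ℝ => g ω - ∑ k ∈ Finset.range (N + 1), c k * (ω : ℂ) ^ (α - (k : ℂ)))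
      =O[Filter.atTop] fun ω : ℝ => ω ^ (α.re - (N : ℝ) - 1))
    (a : ℕ → ℂ)
    (ha : ∀ m : ℕ, a m = ∑ n ∈ Finset.range (m + 1),
      c (m - n) * (Complex.Gamma (α + 1 - (m : ℂ) + (n : ℂ)) / Complex.Gamma (α + 1 - (m : ℂ)))
        * (μ : ℂ) ^ n / (n.factorial : ℂ)) :
    (fun x : ℝ => g (μ + 1 / x) - ∑ m ∈ Finset.range (N + 1), a m * (x : ℂ) ^ ((m : ℂ) - α))
      =O[nhdsWithin 0 (Set.Ioi 0)] fun x : ℝ => x ^ ((N : ℝ) + 1 - α.re) := by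
  have hω : Tendsto (fun x : ℝ => μ + 1 / x) (𝓝[>] 0) atTop := by
    simpa only [one_div] using tendsto_atTop_add_const_left _ μ tendsto_inv_nhdsGT_zero
  have hexpansion : (fun x : ℝ => g (μ + 1 / x) -
      ∑ k ∈ range (N + 1), c k * ((μ + 1 / x : ℝ) : ℂ) ^ (α - k))
        =O[𝓝[>] 0] fun x => x ^ ((N : ℝ) + 1 - α.re) := by
    have := (hasymp.comp_tendsto hω).trans (isBigO_rpow_add_one_div μ _)
    rwa [show -(α.re - N - 1) = (N : ℝ) + 1 - α.re by ring] at this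
  have hbinomial : ∀ k ∈ range (N + 1), (fun x : ℝ => c k * (((μ + 1 / x : ℝ) : ℂ) ^ (α - k) -
      (x : ℂ) ^ (-(α - k)) * ∑ n ∈ range (N + 1 - k), Ring.choose (α - k) n * (μ * x) ^ n))
        =O[𝓝[>] 0] fun x => x ^ ((N : ℝ) + 1 - α.re) := by
    intro k hk
    have hexp : ((N + 1 - k : ℕ) : ℝ) - (α - k).re = N + 1 - α.re := by
      rw [Nat.cast_sub (mem_range.mp hk).le, sub_re, natCast_re]
      push_cast
      ring
    have := isBigO_cpow_add_one_div_sub_sum μ (α - k) (N + 1 - k)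
    rw [hexp] at this
    exact this.const_mul_left (c k)
  refine (hexpansion.add (IsBigO.fun_sum hbinomial)).congr' ?_ EventuallyEq.rfl
  filter_upwards [eventually_mem_nhdsWithin] with x (hx : 0 < x)
  rw [sum_mul_cpow_eq_sum_mul_sum_choose α hα N μ c a ha hx]
  simp only [mul_sub, sum_sub_distrib]
  ring

/-- With `a_m(μ) = ∑_{n=0}^m c_{m−n} (Γ(α+1−m+n)/Γ(α+1−m)) μⁿ/n!`, the change
of variable `ω = μ + 1/x` turns the asymptotic expansion of `g` at `ω → +∞` into
`g(μ + 1/x) − ∑_{m=0}^N a_m(μ) x^{m−α} = O(x^{N+1−Re α})` as `x → 0⁺`. -/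
theorem stmt11 (α : ℂ) (hα : ∀ n : ℤ, α ≠ (n : ℂ)) (N : ℕ) (ωc μ : ℝ)
    (hωc : 0 < ωc) (hμ0 : 0 ≤ μ) (hμ : μ < ωc) (c : ℕ → ℂ) (g : ℝ → ℂ)
    (hmeas : Measurable g)
    (hloc : LocallyIntegrableOn g (Set.Ici ωc))
    (hasymp : (fun ω : ℝ => g ω - ∑ k ∈ Finset.range (N + 1), c k * (ω : ℂ) ^ (α - (k : ℂ)))
      =O[Filter.atTop] fun ω : ℝ => ω ^ (α.re - (N : ℝ) - 1))
    (a : ℕ → ℂ)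
    (ha : ∀ m : ℕ, a m = ∑ n ∈ Finset.range (m + 1),
      c (m - n) * (Complex.Gamma (α + 1 - (m : ℂ) + (n : ℂ)) / Complex.Gamma (α + 1 - (m : ℂ)))
        * (μ : ℂ) ^ n / (n.factorial : ℂ)) :
    (fun x : ℝ => g (μ + 1 / x) - ∑ m ∈ Finset.range (N + 1), a m * (x : ℂ) ^ ((m : ℂ) - α))
      =O[nhdsWithin 0 (Set.Ioi 0)] fun x : ℝ => x ^ ((N : ℝ) + 1 - α.re) :=
  stmt11_general α hα N μ c g hasymp a ha
end

section
/- (Relation between the spectral eta function and the ε-derivative of the shifted zeta function.) Let (ω_k)_{k∈ℕ} be a sequence of nonzero real numbers with δ := inf_k |ω_k| > 0, and let ν ∈ ℂ be such that Σ_k |ω_k|^{−2 Re ν} < ∞. For real ε with |ε| < δ define ζ_s(ν, ε) := Σ_k ((ω_k − ε)²)^{−ν} (a complex power of the positive real (ω_k − ε)²). Then ε ↦ ζ_s(ν, ε) is differentiable at ε = 0 and (∂/∂ε) ζ_s(ν, ε)|_{ε=0} = 2ν · Σ_k ω_k |ω_k|^{−2ν−2}, i.e. the derivative equals 2ν ·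 η_s(ν+1), where η_s(ν) := Σ_k ω_k |ω_k|^{−2ν}. -/
/-!
Differentiate the series term by term. For `|ε| < δ/2` every `|ω_k - ε|` lies between `|ω_k|/2`
and `2|ω_k|`, so the `ε`-derivative `2ν (ω_k - ε) ((ω_k - ε)²)^{-ν-1}` of the `k`-th term has norm
at most a constant times `|ω_k|^{-2 Re ν - 1} ≤ |ω_k|^{-2 Re ν} / δ`, a summable bound uniform
in `ε`.
-/

open Complex

lemma ofReal_sq_cpow (x : ℝ) (w : ℂ) : ((x ^ 2 : ℝ) : ℂ) ^ w = ((|x| : ℝ) : ℂ) ^ (2 * w) := by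
  rw [← sq_abs, ofReal_pow, ← cpow_ofNat_mul'] <;>
    rw [arg_ofReal_of_nonneg (abs_nonneg _)] <;> linarith [Real.pi_pos]

lemma norm_ofReal_sq_cpow {x : ℝ} (hx : x ≠ 0) (w : ℂ) :
    ‖((x ^ 2 : ℝ) : ℂ) ^ w‖ = |x| ^ (2 * w.re) := by
  rw [ofReal_sq_cpow, norm_cpow_eq_rpow_re_of_pos (abs_pos.2 hx)]
  simp

lemma hasDerivAt_ofReal_sq_sub_cpow {a ε : ℝ} (h : a - ε ≠ 0) (w : ℂ) :
    HasDerivAt (fun x : ℝ => (((a - x) ^ 2 : ℝ) : ℂ) ^ w)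
      (-2 * w * (a - ε : ℝ) * (((a - ε) ^ 2 : ℝ) : ℂ) ^ (w - 1)) ε := by
  have hsq : HasDerivAt (fun x : ℝ => (a - x) ^ 2) (2 * (a - ε) * (-1)) ε := by
    simpa using ((hasDerivAt_id ε).const_sub a).fun_pow 2
  have hcpow := (hasStrictDerivAt_cpow_const (c := w)
    (ofReal_mem_slitPlane.2 (pow_pos (abs_pos.2 h) 2 |>.trans_eq (sq_abs _)))).hasDerivAt
  refine (hcpow.comp (𝕜 := ℝ) ε hsq.ofReal_comp).congr_deriv ?_
  push_cast
  ring

lemma abs_sub_rpow_le {a ε : ℝ} (ha : a ≠ 0) (hε : |ε| ≤ |a| / 2) (r : ℝ) :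
    |a - ε| ^ r ≤ 2 ^ |r| * |a| ^ r := by
  have ha' : 0 < |a| := abs_pos.2 ha
  have hlo : |a| / 2 ≤ |a - ε| := by linarith [abs_sub_abs_le_abs_sub a ε]
  have hhi : |a - ε| ≤ 2 * |a| := by linarith [abs_sub a ε]
  rcases le_or_gt 0 r with hr | hr
  · calc |a - ε| ^ r ≤ (2 * |a|) ^ r := Real.rpow_le_rpow (abs_nonneg _) hhi hr
      _ = 2 ^ |r| * |a| ^ r := by rw [abs_of_nonneg hr, Real.mul_rpow zero_le_two ha'.le]
  · calc |a - ε| ^ r ≤ (|a| / 2) ^ r := Real.rpow_le_rpow_of_nonpos (by positivity) hlo hr.le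
      _ = 2 ^ |r| * |a| ^ r := by
        rw [abs_of_neg hr, Real.div_rpow ha'.le zero_le_two, Real.rpow_neg zero_le_two]
        field_simp

lemma norm_deriv_ofReal_sq_sub_cpow_le {a ε δ : ℝ} (hδ : 0 < δ) (ha : δ ≤ |a|)
    (hε : |ε| ≤ |a| / 2) (w : ℂ) :
    ‖-2 * w * (a - ε : ℝ) * (((a - ε) ^ 2 : ℝ) : ℂ) ^ (w - 1)‖ ≤
      2 * ‖w‖ * 2 ^ |2 * w.re - 1| / δ * |a| ^ (2 * w.re) := by
  have ha' : 0 < |a| := hδ.trans_le ha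
  have hsub : 0 < |a - ε| := by linarith [abs_sub_abs_le_abs_sub a ε]
  have hnorm : ‖-2 * w * (a - ε : ℝ) * (((a - ε) ^ 2 : ℝ) : ℂ) ^ (w - 1)‖ =
      2 * ‖w‖ * |a - ε| ^ (2 * w.re - 1) := by
    rw [norm_mul, norm_mul, norm_ofReal_sq_cpow (abs_pos.1 hsub), norm_mul, norm_neg,
      norm_real, Real.norm_eq_abs, sub_re, one_re,
      show 2 * (w.re - 1) = 2 * w.re - 1 + (-1) by ring, Real.rpow_add hsub, Real.rpow_neg_one]
    field_simp
    simp [mul_comm]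
  have hdiv : |a| ^ (2 * w.re - 1) ≤ |a| ^ (2 * w.re) / δ := by
    rw [Real.rpow_sub ha', Real.rpow_one]
    exact div_le_div_of_nonneg_left (by positivity) hδ ha
  calc ‖-2 * w * (a - ε : ℝ) * (((a - ε) ^ 2 : ℝ) : ℂ) ^ (w - 1)‖
      = 2 * ‖w‖ * |a - ε| ^ (2 * w.re - 1) := hnorm
    _ ≤ 2 * ‖w‖ * (2 ^ |2 * w.re - 1| * (|a| ^ (2 * w.re) / δ)) := by
        gcongr
        exact (abs_sub_rpow_le (abs_pos.1 ha') hε _).trans (by gcongr)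
    _ = 2 * ‖w‖ * 2 ^ |2 * w.re - 1| / δ * |a| ^ (2 * w.re) := by ring

theorem hasDerivAt_tsum_ofReal_sq_sub_cpow {ι : Type*} {ω : ι → ℝ} {δ : ℝ} (hδ : 0 < δ)
    (hω : ∀ k, δ ≤ |ω k|) {w : ℂ} (hw : Summable fun k => |ω k| ^ (2 * w.re)) :
    HasDerivAt (fun ε : ℝ => ∑' k, (((ω k - ε) ^ 2 : ℝ) : ℂ) ^ w)
      (∑' k, -2 * w * (ω k : ℂ) * (((ω k ^ 2 : ℝ) : ℂ)) ^ (w - 1)) 0 := by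
  have hω0 : ∀ k, ω k ≠ 0 := fun k => abs_pos.1 (hδ.trans_le (hω k))
  have hsmall : ∀ k, ∀ ε ∈ Metric.ball (0 : ℝ) (δ / 2), |ε| ≤ |ω k| / 2 := fun k ε hε => by
    rw [mem_ball_zero_iff, Real.norm_eq_abs] at hε
    linarith [hω k]
  have hsub : ∀ k, ∀ ε ∈ Metric.ball (0 : ℝ) (δ / 2), ω k - ε ≠ 0 := fun k ε hε h => by
    have := hsmall k ε hε
    rw [← sub_eq_zero.1 h] at this
    linarith [abs_pos.2 (hω0 k)]
  have h0 : (0 : ℝ) ∈ Metric.ball (0 : ℝ) (δ / 2) := Metric.mem_ball_self (by positivity)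
  have hsum0 : Summable fun k => (((ω k - 0) ^ 2 : ℝ) : ℂ) ^ w :=
    .of_norm (by simpa only [sub_zero, norm_ofReal_sq_cpow (hω0 _)] using hw)
  simpa only [ofReal_sub, ofReal_zero, sub_zero] using
    hasDerivAt_tsum_of_isPreconnected (hw.mul_left (2 * ‖w‖ * 2 ^ |2 * w.re - 1| / δ))
      Metric.isOpen_ball (convex_ball _ _).isPreconnected
      (fun k ε hε => hasDerivAt_ofReal_sq_sub_cpow (hsub k ε hε) w)
      (fun k ε hε => norm_deriv_ofReal_sq_sub_cpow_le hδ (hω k) (hsmall k ε hε) w) h0 hsum0 h0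

theorem stmt18_general (ω : ℕ → ℝ) (hδ : 0 < ⨅ k, |ω k|)
    (ν : ℂ) (hν : Summable fun k => |ω k| ^ (-2 * ν.re)) :
    HasDerivAt (fun ε : ℝ => ∑' k, (((ω k - ε) ^ 2 : ℝ) : ℂ) ^ (-ν))
      (2 * ν * ∑' k, (ω k : ℂ) * ((|ω k| : ℝ) : ℂ) ^ (-2 * ν - 2)) 0 := by
  have hle : ∀ k, ⨅ k, |ω k| ≤ |ω k| :=
    ciInf_le ⟨0, by rintro _ ⟨k, rfl⟩; positivity⟩
  have hν' : Summable fun k => |ω k| ^ (2 * (-ν).re) := by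
    simpa only [neg_re, mul_neg, neg_mul] using hν
  convert hasDerivAt_tsum_ofReal_sq_sub_cpow hδ hle hν' using 1
  rw [← tsum_mul_left]
  congr 1 with k
  rw [ofReal_sq_cpow]
  ring_nf

/-- Relation between the spectral eta function and the ε-derivative of the
shifted zeta function: with `ζ_s(ν,ε) = ∑_k ((ω_k − ε)²)^{−ν}`, one has
`(∂/∂ε) ζ_s(ν,ε)|_{ε=0} = 2ν ∑_k ω_k |ω_k|^{−2ν−2} = 2ν η_s(ν+1)`. -/
theorem stmt18 (ω : ℕ → ℝ) (hω : ∀ k, ω k ≠ 0) (hδ : 0 < ⨅ k, |ω k|)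
    (ν : ℂ) (hν : Summable fun k => |ω k| ^ (-2 * ν.re)) :
    HasDerivAt (fun ε : ℝ => ∑' k, (((ω k - ε) ^ 2 : ℝ) : ℂ) ^ (-ν))
      (2 * ν * ∑' k, (ω k : ℂ) * ((|ω k| : ℝ) : ℂ) ^ (-2 * ν - 2)) 0 :=
  stmt18_general ω hδ ν hν
end

section
/- (Special values of the spectral zeta function at non-positive integers in terms of heat-kernel coefficients.) Let d, n ∈ ℕ, set K := 2n + d, let δ > 0 and C ≥ 0, and let F : (0, ∞) → ℂ be locally integrable with |F(τ)| ≤ C e^{−δτ} for all τ ≥ 1, and suppose b_0, …, b_K ∈ ℂ satisfy F(τ) − Σ_{k=0}^{K} b_k τ^{(k−d)/2} = O(τ^{(K+1−d)/2}) as τ → 0⁺. Define G(ν) := ∫_0^1 τ^{ν−1} (F(τ) − Σ_{k=0}^{K} b_k τ^{(k−d)/2}) dτ + Σ_{k=0}^{K} b_k/(ν + (k−d)/2) + ∫_1^∞ τ^{ν−1} F(τ) dτ. Then: (i) for every ν ∈ ℂ with Re ν > d/2, G(ν) = ∫_0^∞ τ^{ν−1} F(τ) dτ; and (ii) lim_{ν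 → −n} G(ν)/Γ(ν) = (−1)^n · n! · b_{2n+d}. -/
/-!
Split the Mellin integral of `F` at `τ = 1`. On `(1, ∞)` exponential decay makes it entire. On
`(0, 1]` subtract the expansion: the remainder is `O(τ ^ (n + 1/2))`, so its Mellin integral is
holomorphic for `Re ν > -n - 1/2`, while each monomial `b_k τ ^ ((k - d)/2)` contributes
`b_k / (ν + (k - d)/2)` for `Re ν > d/2`. Near `ν = -n` only the term `k = 2n + d` has a pole,
namely `b_{2n+d} / (ν + n)`; as `1/Γ` vanishes at `-n` and `(ν + n) Γ(ν) → (-1)ⁿ / n!`, dividing by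
`Γ` leaves `(-1)ⁿ n! b_{2n+d}`.
-/

open MeasureTheory Complex Filter Set Asymptotics Topology

theorem MeasureTheory.LocallyIntegrableOn.indicator {X E : Type*} [TopologicalSpace X]
    [MeasurableSpace X] [NormedAddCommGroup E] {μ : Measure X} {f : X → E} {s t : Set X}
    (hf : LocallyIntegrableOn f s μ) (ht : MeasurableSet t) :
    LocallyIntegrableOn (t.indicator f) s μ := fun x hx =>
  let ⟨u, hu, hfu⟩ := hf x hx
  ⟨u, hu, hfu.indicator ht⟩

section Indicator

variable {α E F : Type*} [NormedAddCommGroup E] [Norm F] {l : Filter α} {s : Set α}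
  {f : α → E} {g : α → F}

theorem Asymptotics.IsBigO.indicator_of_mem (hs : s ∈ l) (h : f =O[l] g) :
    s.indicator f =O[l] g :=
  EventuallyEq.trans_isBigO (by filter_upwards [hs] with x hx using Set.indicator_of_mem hx f) h

theorem Asymptotics.isBigO_indicator_of_compl_mem (hs : sᶜ ∈ l) (f : α → E) (g : α → F) :
    s.indicator f =O[l] g :=
  EventuallyEq.trans_isBigO (f₂ := 0)
    (by filter_upwards [hs] with x hx using indicator_of_notMem hx f) (isBigO_zero g l)

end Indicator

theorem compl_Ioc_zero_one_mem_atTop : (Ioc (0 : ℝ) 1)ᶜ ∈ atTop :=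
  mem_of_superset (Ioi_mem_atTop 1) fun _ hx hx' => (mem_Ioi.1 hx).not_ge hx'.2

theorem compl_Ioi_one_mem_nhdsGT_zero : (Ioi (1 : ℝ))ᶜ ∈ 𝓝[>] 0 :=
  mem_of_superset (Ioc_mem_nhdsGT zero_lt_one) fun _ hx => not_lt.2 hx.2

section Mellin

variable {E : Type*} [NormedAddCommGroup E] [NormedSpace ℂ E] {f : ℝ → E} {s : Set ℝ} {ν : ℂ}

theorem mellinConvergent_indicator_iff (hs : MeasurableSet s) (hs0 : s ⊆ Ioi 0) :
    MellinConvergent (s.indicator f) ν ↔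
      IntegrableOn (fun τ : ℝ => (τ : ℂ) ^ (ν - 1) • f τ) s := by
  simp_rw [MellinConvergent, ← indicator_smul, IntegrableOn, integrable_indicator_iff hs,
    IntegrableOn, Measure.restrict_restrict_of_subset hs0]

theorem mellin_indicator (hs : MeasurableSet s) (hs0 : s ⊆ Ioi 0) (f : ℝ → E) :
    mellin (s.indicator f) = fun ν => ∫ τ in s, (τ : ℂ) ^ (ν - 1) • f τ := by
  ext ν
  simp_rw [mellin, ← indicator_smul, integral_indicator hs,
    Measure.restrict_restrict_of_subset hs0]

theorem hasMellin_indicator_iff (hs : MeasurableSet s) (hs0 : s ⊆ Ioi 0) {m : E} :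
    HasMellin (s.indicator f) ν m ↔
      IntegrableOn (fun τ : ℝ => (τ : ℂ) ^ (ν - 1) • f τ) s ∧
        ∫ τ in s, (τ : ℂ) ^ (ν - 1) • f τ = m := by
  rw [HasMellin, mellinConvergent_indicator_iff hs hs0, mellin_indicator hs hs0]

theorem integrableOn_Ioc_zero_one_cpow_smul_of_isBigO (hf : LocallyIntegrableOn f (Ioi 0))
    {β : ℝ} (hβ : f =O[𝓝[>] 0] (· ^ β)) (hν : -β < ν.re) :
    IntegrableOn (fun τ : ℝ => (τ : ℂ) ^ (ν - 1) • f τ) (Ioc 0 1) :=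
  (mellinConvergent_indicator_iff measurableSet_Ioc Ioc_subset_Ioi_self).1 <|
    mellinConvergent_of_isBigO_rpow (hf.indicator measurableSet_Ioc)
      (isBigO_indicator_of_compl_mem compl_Ioc_zero_one_mem_atTop f _) (lt_add_one ν.re)
      (by simpa using hβ.indicator_of_mem (Ioc_mem_nhdsGT zero_lt_one)) hν

theorem differentiableAt_setIntegral_Ioc_zero_one_cpow_smul_of_isBigO
    (hf : LocallyIntegrableOn f (Ioi 0)) {β : ℝ} (hβ : f =O[𝓝[>] 0] (· ^ β)) (hν : -β < ν.re) :
    DifferentiableAt ℂ (fun ν : ℂ => ∫ τ in Ioc (0 : ℝ) 1, (τ : ℂ) ^ (ν - 1) • f τ) ν := by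
  rw [← mellin_indicator measurableSet_Ioc Ioc_subset_Ioi_self]
  exact mellin_differentiableAt_of_isBigO_rpow (hf.indicator measurableSet_Ioc)
    (isBigO_indicator_of_compl_mem compl_Ioc_zero_one_mem_atTop f _) (lt_add_one ν.re)
    (by simpa using hβ.indicator_of_mem (Ioc_mem_nhdsGT zero_lt_one)) hν

theorem integrableOn_Ioi_one_cpow_smul_of_isBigO_exp (hf : LocallyIntegrableOn f (Ioi 0))
    {δ : ℝ} (hδ : 0 < δ) (hdecay : f =O[atTop] fun τ => Real.exp (-δ * τ)) (ν : ℂ) :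
    IntegrableOn (fun τ : ℝ => (τ : ℂ) ^ (ν - 1) • f τ) (Ioi 1) :=
  (mellinConvergent_indicator_iff measurableSet_Ioi (Ioi_subset_Ioi zero_le_one)).1 <|
    mellinConvergent_of_isBigO_rpow_exp hδ (hf.indicator measurableSet_Ioi)
      (hdecay.indicator_of_mem (Ioi_mem_atTop 1))
      (isBigO_indicator_of_compl_mem compl_Ioi_one_mem_nhdsGT_zero f _) (sub_one_lt ν.re)

theorem differentiable_setIntegral_Ioi_one_cpow_smul_of_isBigO_exp
    (hf : LocallyIntegrableOn f (Ioi 0)) {δ : ℝ} (hδ : 0 < δ)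
    (hdecay : f =O[atTop] fun τ => Real.exp (-δ * τ)) :
    Differentiable ℂ (fun ν : ℂ => ∫ τ in Ioi (1 : ℝ), (τ : ℂ) ^ (ν - 1) • f τ) := by
  rw [← mellin_indicator measurableSet_Ioi (Ioi_subset_Ioi zero_le_one)]
  exact fun ν => mellin_differentiableAt_of_isBigO_rpow_exp hδ (hf.indicator measurableSet_Ioi)
    (hdecay.indicator_of_mem (Ioi_mem_atTop 1))
    (isBigO_indicator_of_compl_mem compl_Ioi_one_mem_nhdsGT_zero f _) (sub_one_lt ν.re)

end Mellin

theorem locallyIntegrableOn_sub_sum_cpow {ι : Type*} (t : Finset ι) (b a : ι → ℂ) {F : ℝ → ℂ}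
    (hF : LocallyIntegrableOn F (Ioi 0)) :
    LocallyIntegrableOn (fun τ : ℝ => F τ - ∑ i ∈ t, b i * (τ : ℂ) ^ a i) (Ioi 0) :=
  hF.sub <| ContinuousOn.locallyIntegrableOn (continuousOn_finsetSum _ fun _ _ =>
    continuousOn_const.mul (continuous_ofReal.continuousOn.cpow_const
      fun _ hτ => ofReal_mem_slitPlane.2 hτ)) measurableSet_Ioi

theorem setIntegral_Ioi_zero_cpow_mul_eq {ι : Type*} (t : Finset ι) (b a : ι → ℂ) {F : ℝ → ℂ}
    {ν : ℂ} (ha : ∀ i ∈ t, 0 < ν.re + (a i).re)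
    (h₀ : IntegrableOn (fun τ : ℝ => (τ : ℂ) ^ (ν - 1) *
      (F τ - ∑ i ∈ t, b i * (τ : ℂ) ^ a i)) (Ioc 0 1))
    (h₁ : IntegrableOn (fun τ : ℝ => (τ : ℂ) ^ (ν - 1) * F τ) (Ioi 1)) :
    ∫ τ in Ioi (0 : ℝ), (τ : ℂ) ^ (ν - 1) * F τ =
      (∫ τ in Ioc (0 : ℝ) 1, (τ : ℂ) ^ (ν - 1) * (F τ - ∑ i ∈ t, b i * (τ : ℂ) ^ a i))
        + ∑ i ∈ t, b i / (ν + a i) + ∫ τ in Ioi (1 : ℝ), (τ : ℂ) ^ (ν - 1) * F τ := by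
  have h_pow : ∀ i ∈ t, IntegrableOn (fun τ : ℝ => b i * ((τ : ℂ) ^ (ν - 1) * (τ : ℂ) ^ a i))
      (Ioc 0 1) ∧
        ∫ τ in Ioc (0 : ℝ) 1, b i * ((τ : ℂ) ^ (ν - 1) * (τ : ℂ) ^ a i) = b i / (ν + a i) := by
    intro i hi
    obtain ⟨h_int, h_eq⟩ := (hasMellin_indicator_iff measurableSet_Ioc Ioc_subset_Ioi_self).1
      (hasMellin_cpow_Ioc (a i) (ha i hi))
    simp only [smul_eq_mul] at h_int h_eq
    exact ⟨h_int.const_mul (b i), by rw [integral_const_mul, h_eq, mul_one_div]⟩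
  have h_split : (fun τ : ℝ => (τ : ℂ) ^ (ν - 1) * F τ) = fun τ : ℝ =>
      (τ : ℂ) ^ (ν - 1) * (F τ - ∑ i ∈ t, b i * (τ : ℂ) ^ a i) +
        ∑ i ∈ t, b i * ((τ : ℂ) ^ (ν - 1) * (τ : ℂ) ^ a i) := by
    ext τ
    rw [mul_sub, Finset.mul_sum]
    simp only [mul_left_comm, sub_add_cancel]
  have h_int₀ : IntegrableOn (fun τ : ℝ => (τ : ℂ) ^ (ν - 1) * F τ) (Ioc 0 1) := by
    rw [h_split]
    exact h₀.add (integrable_finsetSum t fun i hi => (h_pow i hi).1)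
  rw [← Ioc_union_Ioi_eq_Ioi zero_le_one, setIntegral_union Ioc_disjoint_Ioi_same
    measurableSet_Ioi h_int₀ h₁, h_split, integral_add h₀
    (integrable_finsetSum t fun i hi => (h_pow i hi).1), integral_finsetSum t
    fun i hi => (h_pow i hi).1, Finset.sum_congr rfl fun i hi => (h_pow i hi).2]

theorem tendsto_add_mul_Gamma_nhds_neg_nat (n : ℕ) :
    Tendsto (fun z : ℂ => (z + n) * Gamma z) (𝓝[≠] (-n)) (𝓝 ((-1) ^ n / n.factorial)) := by
  induction n with
  | zero => simpa using tendsto_self_mul_Gamma_nhds_zero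
  | succ n ih =>
    push_cast
    have h_shift : Tendsto (· + 1) (𝓝[≠] (-(n + 1) : ℂ)) (𝓝[≠] (-n : ℂ)) := by
      have h := (continuous_add_const (1 : ℂ)).continuousWithinAt.tendsto_nhdsWithin
        (x := -(n + 1)) (s := {-(n + 1 : ℂ)}ᶜ) (t := {(-n : ℂ)}ᶜ)
        fun z hz h => hz (by rw [mem_singleton_iff] at h ⊢; linear_combination h)
      rwa [show -(n + 1 : ℂ) + 1 = -n by ring] at h
    have h_id : Tendsto id (𝓝[≠] (-(n + 1) : ℂ)) (𝓝 (-(n + 1))) := nhdsWithin_le_nhds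
    have h_pole : (-(n + 1) : ℂ) ≠ 0 := by norm_cast
    have h_lim := (ih.comp h_shift).div h_id h_pole
    refine Tendsto.congr' ?_ (h_lim.trans_eq ?_)
    · filter_upwards [h_id.eventually_ne h_pole] with z (hz : z ≠ 0)
      simp only [Pi.div_apply, Function.comp_apply, id, Gamma_add_one z hz]
      field_simp
      ring
    · rw [Nat.factorial_succ]
      push_cast
      congr 1
      field_simp
      ring

theorem tendsto_div_Gamma_nhds_neg_nat {n : ℕ} {A : ℂ → ℂ} (hA : ContinuousAt A (-n)) (c : ℂ) :
    Tendsto (fun z => (A z + c / (z + n)) / Gamma z) (𝓝[≠] (-n))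
      (𝓝 ((-1) ^ n * n.factorial * c)) := by
  have h_inv : Tendsto (fun z => (Gamma z)⁻¹) (𝓝[≠] (-n : ℂ)) (𝓝 0) := by
    simpa [Gamma_neg_nat_eq_zero] using
      (differentiable_one_div_Gamma.continuous.tendsto (-n : ℂ)).mono_left nhdsWithin_le_nhds
  have h_res := ((tendsto_add_mul_Gamma_nhds_neg_nat n).inv₀
    (by simp [n.factorial_ne_zero])).const_mul c
  convert ((hA.tendsto.mono_left nhdsWithin_le_nhds).mul h_inv).add h_res using 1
  · ext z
    simp only [div_eq_mul_inv, mul_inv]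
    ring
  · rw [mul_zero, zero_add, inv_div, div_eq_mul_inv, ← inv_pow, inv_neg_one]
    ring_nf

theorem continuousAt_sum_div_add {ι : Type*} (t : Finset ι) (b a : ι → ℂ) {z : ℂ}
    (h : ∀ i ∈ t, z + a i ≠ 0) : ContinuousAt (fun z => ∑ i ∈ t, b i / (z + a i)) z :=
  tendsto_finsetSum _ fun i hi =>
    continuousAt_const.div (continuousAt_id.add continuousAt_const) (h i hi)

theorem tendsto_div_Gamma_nhds_neg_nat_of_simple_poles {ι : Type*} [DecidableEq ι] {n : ℕ}
    {A B : ℂ → ℂ} (hA : ContinuousAt A (-n)) (hB : ContinuousAt B (-n)) (t : Finset ι)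
    (b a : ι → ℂ) {i₀ : ι} (hi₀ : i₀ ∈ t) (ha₀ : a i₀ = n)
    (ha : ∀ i ∈ t, i ≠ i₀ → -n + a i ≠ 0) :
    Tendsto (fun z => (A z + ∑ i ∈ t, b i / (z + a i) + B z) / Gamma z) (𝓝[≠] (-n))
      (𝓝 ((-1) ^ n * n.factorial * b i₀)) := by
  have h_rest := continuousAt_sum_div_add (t.erase i₀) b a fun i hi =>
    ha i (Finset.mem_of_mem_erase hi) (Finset.ne_of_mem_erase hi)
  refine (tendsto_div_Gamma_nhds_neg_nat ((hA.add h_rest).add hB) (b i₀)).congr fun z => ?_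
  simp only [Pi.add_apply]
  rw [← Finset.add_sum_erase t _ hi₀, ha₀]
  ring

theorem stmt19_general (d n : ℕ) (δ C : ℝ) (hδ : 0 < δ)
    (F : ℝ → ℂ) (b : ℕ → ℂ)
    (hloc : LocallyIntegrableOn F (Set.Ioi 0))
    (hdecay : ∀ τ : ℝ, 1 ≤ τ → ‖F τ‖ ≤ C * Real.exp (-δ * τ))
    (hasymp : (fun τ : ℝ =>
        F τ - ∑ k ∈ Finset.range (2 * n + d + 1), b k * (τ : ℂ) ^ (((k : ℂ) - (d : ℂ)) / 2))
      =O[nhdsWithin 0 (Set.Ioi 0)]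
        fun τ : ℝ => τ ^ ((((2 * n + d : ℕ) : ℝ) + 1 - (d : ℝ)) / 2))
    (G : ℂ → ℂ)
    (hG : ∀ ν : ℂ, G ν =
      (∫ τ in Set.Ioc (0 : ℝ) 1, (τ : ℂ) ^ (ν - 1) *
          (F τ - ∑ k ∈ Finset.range (2 * n + d + 1),
            b k * (τ : ℂ) ^ (((k : ℂ) - (d : ℂ)) / 2)))
        + (∑ k ∈ Finset.range (2 * n + d + 1), b k / (ν + ((k : ℂ) - (d : ℂ)) / 2))
        + ∫ τ in Set.Ioi (1 : ℝ), (τ : ℂ) ^ (ν - 1) * F τ) :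
    (∀ ν : ℂ, (d : ℝ) / 2 < ν.re →
      G ν = ∫ τ in Set.Ioi (0 : ℝ), (τ : ℂ) ^ (ν - 1) * F τ) ∧
    Filter.Tendsto (fun ν : ℂ => G ν / Complex.Gamma ν)
      (nhdsWithin (-(n : ℂ)) {(-(n : ℂ))}ᶜ)
      (nhds ((-1 : ℂ) ^ n * (n.factorial : ℂ) * b (2 * n + d))) := by
  set K := 2 * n + d
  have hrem : (fun τ : ℝ => F τ - ∑ k ∈ Finset.range (K + 1),
      b k * (τ : ℂ) ^ (((k : ℂ) - d) / 2)) =O[𝓝[>] 0] (· ^ ((n : ℝ) + 1 / 2)) := by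
    convert hasymp using 3
    push_cast [K]
    ring
  have hloc_rem :=
    locallyIntegrableOn_sub_sum_cpow (Finset.range (K + 1)) b (fun k => ((k : ℂ) - d) / 2) hloc
  have hF_top : F =O[atTop] fun τ => Real.exp (-δ * τ) :=
    IsBigO.of_bound C <| (eventually_ge_atTop 1).mono fun τ hτ => by
      simpa [abs_of_pos (Real.exp_pos _)] using hdecay τ hτ
  refine ⟨fun ν hν => (hG ν).trans (setIntegral_Ioi_zero_cpow_mul_eq _ b _ (fun k _ => ?_)
    (integrableOn_Ioc_zero_one_cpow_smul_of_isBigO hloc_rem hrem ?_)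
    (integrableOn_Ioi_one_cpow_smul_of_isBigO_exp hloc hδ hF_top ν)).symm, ?_⟩
  · simp only [div_ofNat_re, sub_re, natCast_re]
    linarith [(k.cast_nonneg : (0 : ℝ) ≤ k)]
  · linarith [(by positivity : (0 : ℝ) ≤ d / 2)]
  refine (tendsto_div_Gamma_nhds_neg_nat_of_simple_poles
    (differentiableAt_setIntegral_Ioc_zero_one_cpow_smul_of_isBigO hloc_rem hrem ?_).continuousAt
    (differentiable_setIntegral_Ioi_one_cpow_smul_of_isBigO_exp hloc hδ hF_top _).continuousAt
    _ b (fun k => ((k : ℂ) - d) / 2) (Finset.self_mem_range_succ K) (by push_cast [K]; ring)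
    fun k _ hkK h => hkK ?_).congr
    fun ν => by rw [hG]; rfl
  · simp only [neg_re, natCast_re]
    linarith
  · exact_mod_cast (by push_cast [K]; linear_combination 2 * h : (k : ℂ) = K)

/-- Special values of the spectral zeta function at non-positive integers in
terms of heat-kernel coefficients. With `K = 2n + d`, `F` locally integrable on `(0,∞)`,
exponentially decaying at infinity, and `F(τ) = ∑_{k=0}^K b_k τ^{(k−d)/2} + O(τ^{(K+1−d)/2})`
as `τ → 0⁺`, the function
`G(ν) = ∫_0^1 τ^{ν−1}(F(τ) − ∑_{k=0}^K b_k τ^{(k−d)/2}) dτ + ∑_{k=0}^K b_k/(ν+(k−d)/2)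
  + ∫_1^∞ τ^{ν−1} F(τ) dτ`
satisfies `G(ν) = ∫_0^∞ τ^{ν−1} F(τ) dτ` for `Re ν > d/2` and
`lim_{ν→−n} G(ν)/Γ(ν) = (−1)ⁿ n! b_{2n+d}`. -/
theorem stmt19 (d n : ℕ) (δ C : ℝ) (hδ : 0 < δ) (hC : 0 ≤ C)
    (F : ℝ → ℂ) (b : ℕ → ℂ)
    (hloc : LocallyIntegrableOn F (Set.Ioi 0))
    (hdecay : ∀ τ : ℝ, 1 ≤ τ → ‖F τ‖ ≤ C * Real.exp (-δ * τ))
    (hasymp : (fun τ : ℝ =>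
        F τ - ∑ k ∈ Finset.range (2 * n + d + 1), b k * (τ : ℂ) ^ (((k : ℂ) - (d : ℂ)) / 2))
      =O[nhdsWithin 0 (Set.Ioi 0)]
        fun τ : ℝ => τ ^ ((((2 * n + d : ℕ) : ℝ) + 1 - (d : ℝ)) / 2))
    (G : ℂ → ℂ)
    (hG : ∀ ν : ℂ, G ν =
      (∫ τ in Set.Ioc (0 : ℝ) 1, (τ : ℂ) ^ (ν - 1) *
          (F τ - ∑ k ∈ Finset.range (2 * n + d + 1),
            b k * (τ : ℂ) ^ (((k : ℂ) - (d : ℂ)) / 2)))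
        + (∑ k ∈ Finset.range (2 * n + d + 1), b k / (ν + ((k : ℂ) - (d : ℂ)) / 2))
        + ∫ τ in Set.Ioi (1 : ℝ), (τ : ℂ) ^ (ν - 1) * F τ) :
    (∀ ν : ℂ, (d : ℝ) / 2 < ν.re →
      G ν = ∫ τ in Set.Ioi (0 : ℝ), (τ : ℂ) ^ (ν - 1) * F τ) ∧
    Filter.Tendsto (fun ν : ℂ => G ν / Complex.Gamma ν)
      (nhdsWithin (-(n : ℂ)) {(-(n : ℂ))}ᶜ)
      (nhds ((-1 : ℂ) ^ n * (n.factorial : ℂ) * b (2 * n + d))) :=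
  stmt19_general d n δ C hδ F b hloc hdecay hasymp G hG
end
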